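/- arXiv:2604.19195 — 9 statements merged into one kernel-verified Lean document; each statement's English description precedes it below -/
import Mathlib

section
/- Let a be a positive integer, b an integer coprime to a, b' an integer with b·b' ≡ 1 (mod a), and γ an integer. Then, as complex numbers, s(b, a; (γ + b/2)/a, 1/2) + (1/2)·(((b'·γ + 1/2)/a)) = −λ(b, a; γ). -/
open scoped BigOperators

/-- The sawtooth function `((x))`: `x - ⌊x⌋ - 1/2` if `x` is not an integer, `0` otherwise. -/
noncomputable def sawtooth (x : ℝ) : ℝ :=
  if Int.fract x = 0 then 0 else Int.fract x - 1/2

/-- The Dedekind–Rademacher sum `s(b, a; x, y)`. -/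
noncomputable def drSum (b : ℤ) (a : ℕ) (x y : ℝ) : ℝ :=
  ∑ j ∈ Finset.range a, sawtooth (x + b * ((j : ℝ) + y) / a) * sawtooth (((j : ℝ) + y) / a)

/-- `λ(b, a; n) = (1/a) ∑_{j=1}^{a-1} ω^{nj} / ((1 - ω^{-j})(1 - ω^{-bj}))`,
where `ω = exp(2πi/a)`. -/
noncomputable def lamSum (b : ℤ) (a : ℕ) (n : ℤ) : ℂ :=
  (1 / (a : ℂ)) * ∑ j ∈ Finset.Ioo 0 a,
    Complex.exp (2 * Real.pi * Complex.I / a) ^ (n * (j : ℤ)) /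
      ((1 - Complex.exp (2 * Real.pi * Complex.I / a) ^ (-(j : ℤ))) *
       (1 - Complex.exp (2 * Real.pi * Complex.I / a) ^ (-(b * (j : ℤ)))))

/-!
For a primitive `a`-th root of unity `ω`, both sawtooth factors of the Dedekind–Rademacher sum
are finite Fourier series with explicit coefficients:
`((m/a)) = (1/a) ∑_{0<l<a} ω^{ml} (1/(ω^{-l} - 1) + 1/2)` and
`(((m + 1/2)/a)) = (1/a) ∑_{0<l<a} ω^{ml} / (ω^{-l} - 1)`.
Substituting both, orthogonality of the characters `j ↦ ω^{kj}` pairs the frequency `l` of the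
first factor with the frequency `-bl` of the second. A partial-fraction identity splits the
resulting term into the `l`-th term of `-λ(b, a; γ)` and a multiple of `ω^{γl}/(ω^{-bl} - 1)`;
after the substitution `l ↦ bl` (with `b'` inverse to `b` modulo `a`) these last terms add up to
`-(1/2) (((b'γ + 1/2)/a))`.
-/

open Finset Function

theorem Int.toNat_emod_eq_of_modEq {a n : ℕ} {t : ℤ} (hn : n < a) (h : t ≡ n [ZMOD a]) :
    (t % a).toNat = n := by
  rw [h.eq, Int.emod_eq_of_lt (by positivity) (by exact_mod_cast hn)]
  rfl

theorem Finset.sum_range_eq_add_sum_Ioo {M : Type*} [AddCommMonoid M] {a : ℕ} (ha : 0 < a)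
    (f : ℕ → M) : ∑ l ∈ range a, f l = f 0 + ∑ l ∈ Ioo 0 a, f l := by
  rw [range_eq_Ico, ← Ioo_insert_left ha, sum_insert (by simp)]

theorem Int.not_dvd_mul_natCast_of_mem_Ioo {a l : ℕ} {b : ℤ} (hb : IsCoprime b a)
    (hl : l ∈ Ioo 0 a) : ¬ (a : ℤ) ∣ b * l := fun h => by
  obtain ⟨hl0, hla⟩ := mem_Ioo.mp hl
  have := Int.le_of_dvd (by exact_mod_cast hl0) (hb.symm.dvd_of_dvd_mul_left h)
  omega

namespace Function.Periodic

variable {M : Type*} {a : ℕ} {c : ℤ → M}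

theorem apply_emod (hc : Periodic c a) (t : ℤ) : c (t % a) = c t := by
  rw [Int.emod_def, mul_comm, ← smul_eq_mul, hc.sub_zsmul_eq]

variable [AddCommMonoid M] [NeZero a]

theorem sum_range_ite_dvd_sub (hc : Periodic c a) (t : ℤ) :
    ∑ n ∈ range a, (if (a : ℤ) ∣ t - n then c n else 0) = c t := by
  have ha : (0 : ℤ) < a := by exact_mod_cast Nat.pos_of_neZero a
  have hdvd_iff : ∀ n ∈ range a, (a : ℤ) ∣ t - n ↔ (t % a).toNat = n := fun n hn => by
    refine ⟨fun h => Int.toNat_emod_eq_of_modEq (mem_range.mp hn) (Int.modEq_iff_dvd.mpr h).symm,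
      fun h => ?_⟩
    rw [← h, Int.toNat_of_nonneg (Int.emod_nonneg t ha.ne')]
    exact (Int.mod_modEq t a).dvd
  have hlt := Int.emod_lt_of_pos t ha
  rw [sum_congr rfl fun n hn => if_congr (hdvd_iff n hn) rfl rfl, sum_ite_eq,
    if_pos (mem_range.mpr (by omega)),
    Int.toNat_of_nonneg (Int.emod_nonneg t ha.ne'), hc.apply_emod]

theorem sum_Ioo_ite_dvd_sub (hc : Periodic c a) {t : ℤ} (ht : ¬ (a : ℤ) ∣ t) :
    ∑ n ∈ Ioo 0 a, (if (a : ℤ) ∣ t - n then c n else 0) = c t := by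
  rw [← hc.sum_range_ite_dvd_sub t, sum_range_eq_add_sum_Ioo (Nat.pos_of_neZero a),
    Nat.cast_zero, sub_zero, if_neg ht, zero_add]

theorem sum_range_comp_mul (hc : Periodic c a) {b b' : ℤ} (hbb' : b * b' ≡ 1 [ZMOD a]) :
    ∑ l ∈ range a, c (b * l) = ∑ l ∈ range a, c l := by
  have ha : (0 : ℤ) < a := by exact_mod_cast Nat.pos_of_neZero a
  have hmem : ∀ t : ℤ, (t % a).toNat ∈ range a := fun t => by
    have := Int.emod_lt_of_pos t ha
    exact mem_range.mpr (by omega)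
  have hcast : ∀ t : ℤ, ((t % a).toNat : ℤ) ≡ t [ZMOD a] := fun t => by
    rw [Int.toNat_of_nonneg (Int.emod_nonneg t ha.ne')]
    exact Int.mod_modEq t a
  have hinv : ∀ {u v : ℤ}, u * v ≡ 1 [ZMOD a] → ∀ l ∈ range a,
      ((v * ((u * l) % a).toNat) % a).toNat = l := fun {u v} huv l hl =>
    Int.toNat_emod_eq_of_modEq (mem_range.mp hl) <|
      calc v * ((u * l) % a).toNat ≡ v * (u * l) [ZMOD a] := (hcast _).mul_left v
        _ = u * v * l := by ring
        _ ≡ 1 * l [ZMOD a] := huv.mul_right _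
        _ = l := one_mul _
  refine sum_nbij' (fun l => ((b * l) % a).toNat) (fun l => ((b' * l) % a).toNat)
    (fun l _ => hmem _) (fun l _ => hmem _) (hinv hbb') (hinv (by rwa [mul_comm])) ?_
  intro l _
  rw [Int.toNat_of_nonneg (Int.emod_nonneg _ ha.ne'), hc.apply_emod]

theorem sum_Ioo_comp_mul [IsLeftCancelAdd M] (hc : Periodic c a) {b b' : ℤ}
    (hbb' : b * b' ≡ 1 [ZMOD a]) :
    ∑ l ∈ Ioo 0 a, c (b * l) = ∑ l ∈ Ioo 0 a, c l := by
  have h := hc.sum_range_comp_mul hbb'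
  rwa [sum_range_eq_add_sum_Ioo (Nat.pos_of_neZero a), sum_range_eq_add_sum_Ioo
    (Nat.pos_of_neZero a), Nat.cast_zero, mul_zero, add_right_inj] at h

end Function.Periodic

theorem sum_range_natCast_mul_pow_of_pow_eq_one {K : Type*} [Field K] {a : ℕ} {z : K}
    (hz : z ^ a = 1) (hz1 : z ≠ 1) : ∑ k ∈ range a, (k : K) * z ^ k = a / (z - 1) := by
  have hz1' : z - 1 ≠ 0 := sub_ne_zero.mpr hz1
  have hgeom : ∑ k ∈ range a, z ^ k = 0 := by rw [geom_sum_eq hz1, hz, sub_self, zero_div]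
  have htel := sum_range_sub (fun k => (k : K) * z ^ k) a
  simp only [Nat.cast_succ, hz, Nat.cast_zero, zero_mul, sub_zero, mul_one] at htel
  have hsplit : ∀ k : ℕ,
      ((k : K) + 1) * z ^ (k + 1) - k * z ^ k = (z - 1) * (k * z ^ k) + z * z ^ k :=
    fun k => by ring
  rw [sum_congr rfl fun k _ => hsplit k, sum_add_distrib, ← mul_sum, ← mul_sum, hgeom,
    mul_zero, add_zero] at htel
  rw [eq_div_iff hz1', ← htel, mul_comm]

def finFourierCoeff {K : Type*} [Field K] (a : ℕ) (ω : K) (F : ℤ → K) (l : ℕ) : K :=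
  ∑ n ∈ range a, F n * (ω ^ (-(l : ℤ))) ^ n

namespace IsPrimitiveRoot

variable {K : Type*} [Field K] {a : ℕ} {ω : K}

theorem zpow_eq_zpow_of_modEq [NeZero a] (hω : IsPrimitiveRoot ω a) {m n : ℤ}
    (h : m ≡ n [ZMOD a]) : ω ^ m = ω ^ n := by
  have hω0 : ω ≠ 0 := hω.ne_zero (NeZero.ne a)
  rw [← div_eq_one_iff_eq (zpow_ne_zero n hω0), ← zpow_sub₀ hω0,
    hω.zpow_eq_one_iff_dvd, ← Int.modEq_iff_dvd]
  exact h.symm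

theorem periodic_zpow_mul [NeZero a] (hω : IsPrimitiveRoot ω a) (k : ℤ) :
    Periodic (fun l : ℤ => ω ^ (k * l)) a := fun l =>
  hω.zpow_eq_zpow_of_modEq <| by
    rw [mul_add, Int.ModEq, Int.add_mul_emod_self_right]

theorem periodic_one_div_zpow_neg_sub_one [NeZero a] (hω : IsPrimitiveRoot ω a) :
    Periodic (fun i : ℤ => 1 / (ω ^ (-i) - 1)) a := fun i => by
  simp only [hω.zpow_eq_zpow_of_modEq (Int.modEq_iff_dvd.mpr ⟨1, by ring⟩ :
    -(i + a) ≡ -i [ZMOD a])]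

theorem sum_range_zpow_mul (hω : IsPrimitiveRoot ω a) (n : ℤ) :
    ∑ k ∈ range a, ω ^ (n * k) = if (a : ℤ) ∣ n then (a : K) else 0 := by
  simp only [zpow_mul, zpow_natCast]
  split_ifs with h
  · simp [(hω.zpow_eq_one_iff_dvd n).mpr h]
  · rw [geom_sum_eq fun h1 => h ((hω.zpow_eq_one_iff_dvd n).mp h1), ← zpow_natCast,
      ← zpow_mul, mul_comm, zpow_mul, hω.zpow_eq_one, one_zpow, sub_self, zero_div]

theorem zpow_neg_natCast_pow_eq_one (hω : IsPrimitiveRoot ω a) (l : ℕ) :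
    (ω ^ (-(l : ℤ))) ^ a = 1 := by
  rw [zpow_neg, zpow_natCast, inv_pow, ← pow_mul, mul_comm, pow_mul, hω.pow_eq_one, one_pow,
    inv_one]

theorem zpow_neg_natCast_ne_one (hω : IsPrimitiveRoot ω a) {l : ℕ} (hl : l ∈ Ioo 0 a) :
    ω ^ (-(l : ℤ)) ≠ 1 := by
  obtain ⟨hl0, hla⟩ := mem_Ioo.mp hl
  rw [zpow_neg, zpow_natCast, inv_ne_one]
  exact hω.pow_ne_one_of_pos_of_lt hl0.ne' hla

theorem natCast_mul_eq_sum_range_finFourierCoeff [NeZero a] (hω : IsPrimitiveRoot ω a)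
    {F : ℤ → K} (hF : Periodic F a) (m : ℤ) :
    a * F m = ∑ l ∈ range a, finFourierCoeff a ω F l * ω ^ (m * l) := by
  have hω0 : ω ≠ 0 := hω.ne_zero (NeZero.ne a)
  have hterm : ∀ l n : ℕ,
      F n * (ω ^ (-(l : ℤ))) ^ n * ω ^ (m * l) = F n * ω ^ ((m - n) * l) :=
    fun l n => by
      rw [mul_assoc, ← zpow_natCast, ← zpow_mul, ← zpow_add₀ hω0]
      ring_nf
  simp only [finFourierCoeff, sum_mul, hterm]
  rw [sum_comm]
  simp only [← mul_sum, hω.sum_range_zpow_mul, mul_ite, mul_zero]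
  rw [← hF.sum_range_ite_dvd_sub m, mul_sum]
  refine sum_congr rfl fun n _ => ?_
  split_ifs <;> ring

theorem natCast_mul_eq_sum_Ioo_finFourierCoeff [NeZero a] (hω : IsPrimitiveRoot ω a)
    {F : ℤ → K} (hF : Periodic F a) (hmean : ∑ n ∈ range a, F n = 0) (m : ℤ) :
    a * F m = ∑ l ∈ Ioo 0 a, finFourierCoeff a ω F l * ω ^ (m * l) := by
  rw [hω.natCast_mul_eq_sum_range_finFourierCoeff hF, sum_range_eq_add_sum_Ioo
    (Nat.pos_of_neZero a)]
  simp [finFourierCoeff, hmean]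

-- `ε + δ = 1/2` says that `F` has mean zero, so the frequency `0` drops out.
theorem eq_sum_Ioo_of_eq_add_div_sub_half [CharZero K] [NeZero a] (hω : IsPrimitiveRoot ω a)
    {F : ℤ → K} (hF : Periodic F a) {ε δ : K} (hεδ : ε + δ = 1 / 2)
    (hval : ∀ n ∈ range a, F n = ((n : K) + ε) / a - 1 / 2 + if n = 0 then δ else 0)
    (m : ℤ) :
    F m = 1 / a * ∑ l ∈ Ioo 0 a, ω ^ (m * l) * (1 / (ω ^ (-(l : ℤ)) - 1) + δ) := by
  have ha : (a : K) ≠ 0 := NeZero.ne _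
  have hsplit : ∀ (z : K), ∀ n ∈ range a, F n * z ^ n
      = 1 / a * ((n : K) * z ^ n) + (ε / a - 1 / 2) * z ^ n + if n = 0 then δ else 0 :=
    fun z n hn => by
      rw [hval n hn]
      split_ifs with h
      · subst h; field_simp; ring
      · field_simp; ring
  have hmean : ∑ n ∈ range a, F n = 0 := by
    have h := sum_congr rfl (hsplit 1)
    simp only [one_pow, mul_one] at h
    rw [h, sum_add_distrib, sum_add_distrib, ← mul_sum, sum_const, card_range, nsmul_eq_mul,
      sum_ite_eq' (range a) 0, if_pos (mem_range.mpr (Nat.pos_of_neZero a))]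
    have hgauss : ∑ n ∈ range a, (n : K) = a * (a - 1) / 2 := by
      have h := congrArg (Nat.cast : ℕ → K) (sum_range_id_mul_two a)
      rw [Nat.cast_mul, Nat.cast_sum, Nat.cast_mul, Nat.cast_pred (Nat.pos_of_neZero a)] at h
      linear_combination h / 2
    rw [hgauss]
    field_simp
    linear_combination 2 * hεδ
  have hcoeff : ∀ l ∈ Ioo 0 a, finFourierCoeff a ω F l = 1 / (ω ^ (-(l : ℤ)) - 1) + δ :=
    fun l hl => by
      have hz := hω.zpow_neg_natCast_pow_eq_one l
      have hz1 := hω.zpow_neg_natCast_ne_one hl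
      rw [finFourierCoeff, sum_congr rfl (hsplit _), sum_add_distrib, sum_add_distrib, ← mul_sum,
        ← mul_sum, sum_range_natCast_mul_pow_of_pow_eq_one hz hz1, geom_sum_eq hz1, hz,
        sum_ite_eq' (range a) 0, if_pos (mem_range.mpr (Nat.pos_of_neZero a))]
      field_simp
      ring
  rw [sum_congr rfl fun l hl => by rw [mul_comm, ← hcoeff l hl],
    ← hω.natCast_mul_eq_sum_Ioo_finFourierCoeff hF hmean m]
  field_simp

theorem sum_range_mul_sum_Ioo [NeZero a] (hω : IsPrimitiveRoot ω a) {b : ℤ} (hb : IsCoprime b a)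
    (c : ℤ) (α : ℕ → K) {β : ℤ → K} (hβ : Periodic β a) :
    ∑ j ∈ range a, (∑ l ∈ Ioo 0 a, ω ^ ((c + b * j) * l) * α l) *
        (∑ i ∈ Ioo 0 a, ω ^ ((j : ℤ) * i) * β i)
      = a * ∑ l ∈ Ioo 0 a, ω ^ (c * l) * α l * β (-(b * l)) := by
  have hω0 : ω ≠ 0 := hω.ne_zero (NeZero.ne a)
  have hterm : ∀ (j l i : ℕ), ω ^ ((c + b * j) * l) * α l * (ω ^ ((j : ℤ) * i) * β i)
      = ω ^ (c * l) * α l * β i * ω ^ ((b * l + i) * j) := fun j l i => by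
    have h : ω ^ ((c + b * j) * l) * ω ^ ((j : ℤ) * i)
        = ω ^ (c * l) * ω ^ ((b * l + i) * j) := by
      rw [← zpow_add₀ hω0, ← zpow_add₀ hω0]
      ring_nf
    linear_combination α l * β i * h
  have hdvd : ∀ l i : ℕ, (a : ℤ) ∣ b * l + i ↔ (a : ℤ) ∣ -(b * l) - i := fun l i => by
    rw [show -(b * l) - (i : ℤ) = -(b * l + i) by ring, dvd_neg]
  calc _ = ∑ l ∈ Ioo 0 a, ∑ i ∈ Ioo 0 a, ∑ j ∈ range a,
        ω ^ (c * l) * α l * β i * ω ^ ((b * l + i) * j) := by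
        simp only [sum_mul_sum, hterm]
        rw [sum_comm]
        exact sum_congr rfl fun l _ => sum_comm
    _ = ∑ l ∈ Ioo 0 a, a * (ω ^ (c * l) * α l) *
        ∑ i ∈ Ioo 0 a, (if (a : ℤ) ∣ -(b * l) - i then β i else 0) := by
        refine sum_congr rfl fun l _ => ?_
        rw [mul_sum]
        refine sum_congr rfl fun i _ => ?_
        rw [← mul_sum, hω.sum_range_zpow_mul]
        simp only [hdvd]
        split_ifs <;> ring
    _ = _ := by
        rw [mul_sum]
        refine sum_congr rfl fun l hl => ?_
        have hbl : ¬ (a : ℤ) ∣ -(b * l) := by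
          rw [dvd_neg]
          exact Int.not_dvd_mul_natCast_of_mem_Ioo hb hl
        rw [hβ.sum_Ioo_ite_dvd_sub hbl]
        ring

end IsPrimitiveRoot

theorem zpow_partial_fraction {K : Type*} [Field K] {ω : K} (hω0 : ω ≠ 0) (g b l : ℤ)
    (hl : ω ^ l ≠ 1) (hbl : ω ^ (b * l) ≠ 1) :
    ω ^ ((g + b) * l) * (1 / (ω ^ (-l) - 1) + 1 / 2) * (1 / (ω ^ (b * l) - 1))
      = -(ω ^ (g * l) / ((1 - ω ^ (-l)) * (1 - ω ^ (-(b * l)))))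
        - ω ^ (g * l) * (1 / (ω ^ (-(b * l)) - 1)) / 2 := by
  have hw0 : ω ^ l ≠ 0 := zpow_ne_zero l hω0
  have hv0 : ω ^ (b * l) ≠ 0 := zpow_ne_zero _ hω0
  have hw1 : ω ^ l - 1 ≠ 0 := sub_ne_zero.mpr hl
  have hv1 : ω ^ (b * l) - 1 ≠ 0 := sub_ne_zero.mpr hbl
  rw [add_mul, zpow_add₀ hω0, zpow_neg, zpow_neg]
  generalize ω ^ l = w at *
  generalize ω ^ (b * l) = v at *
  have hw1' : 1 - w ≠ 0 := fun h => hw1 (by linear_combination -h)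
  have hiw : w⁻¹ - 1 = (1 - w) / w := by field_simp
  have hiw' : 1 - w⁻¹ = (w - 1) / w := by field_simp
  have hiv : v⁻¹ - 1 = -(v - 1) / v := by field_simp; ring
  have hiv' : 1 - v⁻¹ = (v - 1) / v := by field_simp
  rw [hiw, hiw', hiv, hiv']
  field_simp
  ring

theorem sawtooth_add_intCast (x : ℝ) (n : ℤ) : sawtooth (x + n) = sawtooth x := by
  rw [sawtooth, sawtooth, Int.fract_add_intCast]

theorem sawtooth_of_pos_of_lt_one {x : ℝ} (h0 : 0 < x) (h1 : x < 1) : sawtooth x = x - 1 / 2 := by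
  rw [sawtooth, Int.fract_eq_self.mpr ⟨h0.le, h1⟩, if_neg h0.ne']

theorem periodic_sawtooth_intCast_add_div (a : ℕ) [NeZero a] (y : ℝ) :
    Periodic (fun m : ℤ => sawtooth ((m + y) / a)) a := fun m => by
  have ha : (a : ℝ) ≠ 0 := NeZero.ne _
  have hshift : (((m + a : ℤ) : ℝ) + y) / a = (m + y) / a + (1 : ℤ) := by
    push_cast
    field_simp
    ring
  simp only [hshift, sawtooth_add_intCast]

theorem sawtooth_natCast_div {a n : ℕ} (hn : n < a) :
    sawtooth (n / a) = n / a - 1 / 2 + if n = 0 then 1 / 2 else 0 := by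
  have ha : (0 : ℝ) < a := by exact_mod_cast (Nat.zero_le n).trans_lt hn
  rcases Nat.eq_zero_or_pos n with rfl | hn0
  · simp [sawtooth]
  · rw [sawtooth_of_pos_of_lt_one (by positivity) ((div_lt_one ha).mpr
      (by exact_mod_cast hn)), if_neg hn0.ne', add_zero]

theorem sawtooth_natCast_add_half_div {a n : ℕ} (hn : n < a) :
    sawtooth ((n + 1 / 2) / a) = (n + 1 / 2) / a - 1 / 2 := by
  have hn' : (n : ℝ) + 1 ≤ a := by exact_mod_cast hn
  have ha : (0 : ℝ) < a := by linarith [(n.cast_nonneg : (0 : ℝ) ≤ n)]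
  exact sawtooth_of_pos_of_lt_one (by positivity) ((div_lt_one ha).mpr (by linarith))

theorem drSum_intCast_add_half_div_half (a : ℕ) (b γ : ℤ) :
    drSum b a ((γ + b / 2) / a) (1 / 2)
      = ∑ j ∈ range a,
          sawtooth (((γ + b + b * j : ℤ) : ℝ) / a) * sawtooth ((j + 1 / 2) / a) := by
  refine sum_congr rfl fun j _ => ?_
  rw [mul_div_assoc, ← mul_div_assoc, ← add_div]
  push_cast
  ring_nf

namespace IsPrimitiveRoot

variable {a : ℕ} [NeZero a] {ω : ℂ}

theorem sawtooth_intCast_div_eq_sum (hω : IsPrimitiveRoot ω a) (m : ℤ) :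
    (sawtooth (m / a) : ℂ)
      = 1 / a * ∑ l ∈ Ioo 0 a, ω ^ (m * l) * (1 / (ω ^ (-(l : ℤ)) - 1) + 1 / 2) :=
  hω.eq_sum_Ioo_of_eq_add_div_sub_half (F := fun m : ℤ => (sawtooth (m / a) : ℂ))
    (by simpa using (periodic_sawtooth_intCast_add_div a 0).comp ((↑) : ℝ → ℂ))
    (ε := 0) (by norm_num)
    (fun n hn => by
      simp only [Int.cast_natCast, sawtooth_natCast_div (mem_range.mp hn)]
      split_ifs <;> push_cast <;> ring) m

theorem sawtooth_intCast_add_half_div_eq_sum (hω : IsPrimitiveRoot ω a) (m : ℤ) :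
    (sawtooth ((m + 1 / 2) / a) : ℂ)
      = 1 / a * ∑ l ∈ Ioo 0 a, ω ^ (m * l) * (1 / (ω ^ (-(l : ℤ)) - 1)) := by
  simpa using hω.eq_sum_Ioo_of_eq_add_div_sub_half
    (F := fun m : ℤ => (sawtooth ((m + 1 / 2) / a) : ℂ))
    ((periodic_sawtooth_intCast_add_div a (1 / 2)).comp ((↑) : ℝ → ℂ))
    (ε := 1 / 2) (δ := 0) (by norm_num)
    (fun n hn => by
      simp only [Int.cast_natCast, sawtooth_natCast_add_half_div (mem_range.mp hn), ite_self,
        add_zero]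
      push_cast
      ring) m

theorem drSum_intCast_add_half_div_half_eq_sum (hω : IsPrimitiveRoot ω a) {b : ℤ}
    (hb : IsCoprime b a) (γ : ℤ) :
    (drSum b a ((γ + b / 2) / a) (1 / 2) : ℂ) = 1 / a * ∑ l ∈ Ioo 0 a,
      ω ^ ((γ + b) * l) * (1 / (ω ^ (-(l : ℤ)) - 1) + 1 / 2) * (1 / (ω ^ (b * l) - 1)) := by
  have hB (j : ℕ) : (sawtooth ((j + 1 / 2) / a) : ℂ)
      = 1 / a * ∑ i ∈ Ioo 0 a, ω ^ ((j : ℤ) * i) * (1 / (ω ^ (-(i : ℤ)) - 1)) := by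
    exact_mod_cast hω.sawtooth_intCast_add_half_div_eq_sum j
  have hconv := hω.sum_range_mul_sum_Ioo hb (γ + b)
    (fun l : ℕ => 1 / (ω ^ (-(l : ℤ)) - 1) + 1 / 2) hω.periodic_one_div_zpow_neg_sub_one
  simp only [neg_neg] at hconv
  rw [drSum_intCast_add_half_div_half, Complex.ofReal_sum]
  simp only [Complex.ofReal_mul, hω.sawtooth_intCast_div_eq_sum, hB]
  calc _ = 1 / a * (1 / a * ∑ j ∈ range a,
        (∑ l ∈ Ioo 0 a, ω ^ ((γ + b + b * j) * l) * (1 / (ω ^ (-(l : ℤ)) - 1) + 1 / 2)) *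
          ∑ i ∈ Ioo 0 a, ω ^ ((j : ℤ) * i) * (1 / (ω ^ (-(i : ℤ)) - 1))) := by
        rw [mul_sum, mul_sum]
        exact sum_congr rfl fun j _ => by ring
    _ = _ := by
        rw [hconv]
        field_simp

theorem sawtooth_mul_add_half_div_eq_sum (hω : IsPrimitiveRoot ω a) {b b' : ℤ}
    (hbb' : b * b' ≡ 1 [ZMOD a]) (γ : ℤ) :
    (sawtooth ((b' * γ + 1 / 2) / a) : ℂ)
      = 1 / a * ∑ l ∈ Ioo 0 a, ω ^ (γ * l) * (1 / (ω ^ (-(b * l)) - 1)) := by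
  have hreindex := ((hω.periodic_zpow_mul (b' * γ)).mul
    hω.periodic_one_div_zpow_neg_sub_one).sum_Ioo_comp_mul hbb'
  simp only [Pi.mul_apply] at hreindex
  rw [show (b' * γ : ℝ) = ((b' * γ : ℤ) : ℝ) by push_cast; ring,
    hω.sawtooth_intCast_add_half_div_eq_sum, ← hreindex]
  refine congrArg _ (sum_congr rfl fun l _ => congrArg (· * _) (hω.zpow_eq_zpow_of_modEq ?_))
  calc b' * γ * (b * l) = γ * l * (b * b') := by ring
    _ ≡ γ * l * 1 [ZMOD a] := hbb'.mul_left _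
    _ = γ * l := mul_one _

end IsPrimitiveRoot

theorem dr_sum_plus_sawtooth_eq_neg_lam (a : ℕ) (ha : 0 < a) (b b' γ : ℤ)
    (hb : Int.gcd b a = 1) (hbb' : b * b' ≡ 1 [ZMOD (a : ℤ)]) :
    ((drSum b a (((γ : ℝ) + (b : ℝ) / 2) / a) (1/2)
        + (1/2) * sawtooth (((b' : ℝ) * (γ : ℝ) + 1/2) / a) : ℝ) : ℂ)
      = - lamSum b a γ := by
  have : NeZero a := ⟨ha.ne'⟩
  have hcop : IsCoprime b a := Int.isCoprime_iff_gcd_eq_one.mpr hb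
  have hω := Complex.isPrimitiveRoot_exp a ha.ne'
  have hne (c : ℤ) (hc : IsCoprime c a) (l : ℕ) (hl : l ∈ Ioo 0 a) :
      Complex.exp (2 * Real.pi * Complex.I / a) ^ (c * l) ≠ 1 := fun h =>
    Int.not_dvd_mul_natCast_of_mem_Ioo hc hl ((hω.zpow_eq_one_iff_dvd _).mp h)
  rw [lamSum, Complex.ofReal_add, Complex.ofReal_mul,
    hω.drSum_intCast_add_half_div_half_eq_sum hcop,
    hω.sawtooth_mul_add_half_div_eq_sum hbb', sum_congr rfl fun (l : ℕ) hl =>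
      zpow_partial_fraction (hω.ne_zero ha.ne') γ b l
        (by simpa using hne 1 isCoprime_one_left l hl) (hne b hcop l hl),
    sum_sub_distrib, sum_neg_distrib, ← sum_div]
  push_cast
  ring
end

section
/- Let a be a positive integer, c an integer coprime to a, and γ an integer. Then s(c, a; (c·γ + 1/2)/a, 0) = s(c, a; (c·γ)/a, 0) + (1/2)·((γ/a)). -/
open scoped BigOperators

/-! For `m : ℤ`, moving `m / a` up by `1 / (2a)` raises `((m / a))` by `1 / (2a)`, except when
`a ∣ m`, where the sawtooth jumps from `0` to `1 / (2a) - 1 / 2`. Taking `m = c (γ + j)`, the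
uniform part `1 / (2a) · ∑ⱼ ((j / a))` vanishes because the sawtooth is odd, and since `c` is a unit
mod `a` the jump occurs only at `j ≡ -γ`, which contributes `-(1/2) ((-γ / a)) = (1/2) ((γ / a))`. -/
open Finset

lemma sawtooth_eq_of_fract_eq {x y : ℝ} (h : Int.fract x = Int.fract y) :
    sawtooth x = sawtooth y := by
  simp only [sawtooth, h]

lemma sawtooth_intCast_add (n : ℤ) (x : ℝ) : sawtooth (n + x) = sawtooth x :=
  sawtooth_eq_of_fract_eq (Int.fract_intCast_add n x)

lemma sawtooth_neg (x : ℝ) : sawtooth (-x) = -sawtooth x := by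
  by_cases h : Int.fract x = 0
  · simp [sawtooth, h, Int.fract_neg_eq_zero.mpr h]
  · have h' : Int.fract (-x) ≠ 0 := mt Int.fract_neg_eq_zero.mp h
    rw [sawtooth, sawtooth, if_neg h, if_neg h', Int.fract_neg h]
    ring

lemma sawtooth_one_sub (x : ℝ) : sawtooth (1 - x) = -sawtooth x := by
  rw [sub_eq_add_neg, ← Int.cast_one, sawtooth_intCast_add, sawtooth_neg]

lemma sawtooth_add_of_fract_add_lt_one {x δ : ℝ} (hδ : 0 < δ) (h : Int.fract x + δ < 1) :
    sawtooth (x + δ) = sawtooth x + δ - if Int.fract x = 0 then 1 / 2 else 0 := by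
  have hfract : Int.fract (x + δ) = Int.fract x + δ :=
    Int.fract_eq_iff.mpr ⟨by linarith [Int.fract_nonneg x], h, ⌊x⌋, by
      rw [← Int.self_sub_fract]; ring⟩
  have hne : Int.fract x + δ ≠ 0 := by linarith [Int.fract_nonneg x]
  unfold sawtooth
  rw [hfract, if_neg hne]
  split_ifs with h0
  · rw [h0]
  · ring

lemma sawtooth_intCast_emod_div (m : ℤ) (a : ℕ) :
    sawtooth (((m % a : ℤ) : ℝ) / a) = sawtooth ((m : ℝ) / a) :=
  sawtooth_eq_of_fract_eq <| by
    rw [Int.fract_div_intCast_eq_div_intCast_mod, Int.fract_div_intCast_eq_div_intCast_mod,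
      Int.emod_emod]

lemma sawtooth_intCast_add_half_div {a : ℕ} (ha : 0 < a) (m : ℤ) :
    sawtooth (((m : ℝ) + 1 / 2) / a)
      = sawtooth ((m : ℝ) / a) + 1 / (2 * a) - if (a : ℤ) ∣ m then 1 / 2 else 0 := by
  have haR : (0 : ℝ) < a := by exact_mod_cast ha
  have hmod : ((m % a : ℤ) : ℝ) + 1 ≤ a := by
    exact_mod_cast Int.emod_lt_of_pos m (by exact_mod_cast ha)
  have hfract_eq_zero : Int.fract ((m : ℝ) / a) = 0 ↔ (a : ℤ) ∣ m := by
    rw [Int.fract_div_intCast_eq_div_intCast_mod, div_eq_zero_iff, Int.cast_eq_zero,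
      ← Int.dvd_iff_emod_eq_zero]
    simp [haR.ne']
  have hlt : Int.fract ((m : ℝ) / a) + 1 / (2 * a) < 1 := by
    rw [Int.fract_div_intCast_eq_div_intCast_mod, div_add_div _ _ haR.ne' (by positivity),
      div_lt_one (by positivity)]
    nlinarith
  rw [show ((m : ℝ) + 1 / 2) / a = m / a + 1 / (2 * a) by ring,
    sawtooth_add_of_fract_add_lt_one (by positivity) hlt, if_congr hfract_eq_zero rfl rfl]

lemma sum_range_sawtooth_div (a : ℕ) : ∑ j ∈ range a, sawtooth ((j : ℝ) / a) = 0 := by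
  cases a with
  | zero => simp
  | succ n =>
    set f : ℕ → ℝ := fun j => sawtooth (((j : ℝ) + 1) / (n + 1))
    have hodd : ∀ j ∈ range n, f (n - 1 - j) = -f j := by
      intro j hj
      have hjn : j + 1 ≤ n := mem_range.mp hj
      have : ((n - 1 - j : ℕ) : ℝ) + 1 = (n + 1) - (j + 1) := by
        rw [Nat.cast_sub (by omega), Nat.cast_sub (by omega)]; push_cast; ring
      simp only [f, this, sub_div, div_self (by positivity : (n : ℝ) + 1 ≠ 0), sawtooth_one_sub]
    have hsum : ∑ j ∈ range n, f j = 0 := by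
      have := sum_range_reflect f n
      rw [sum_congr rfl hodd, sum_neg_distrib] at this
      linarith
    rw [sum_range_succ']
    simpa [f, sawtooth] using hsum

lemma sum_range_ite_dvd_add {a : ℕ} (ha : 0 < a) (γ : ℤ) (f : ℕ → ℝ) :
    ∑ j ∈ range a, (if (a : ℤ) ∣ γ + j then f j else 0) = f ((-γ) % a).toNat := by
  have haZ : (0 : ℤ) < a := by exact_mod_cast ha
  have hdvd_iff : ∀ j ∈ range a, (a : ℤ) ∣ γ + j ↔ j = ((-γ) % a).toNat := by
    intro j hj
    have hj : (j : ℤ) < a := by exact_mod_cast mem_range.mp hj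
    rw [show γ + j = j - (-γ) by ring, ← Int.modEq_iff_dvd, Int.ModEq,
      Int.emod_eq_of_lt (by positivity) hj]
    have := Int.emod_nonneg (-γ) haZ.ne'
    omega
  rw [sum_congr rfl fun j hj => if_congr (hdvd_iff j hj) rfl rfl, sum_ite_eq', if_pos]
  rw [mem_range]
  have := Int.emod_lt_of_pos (-γ) haZ
  omega

theorem drSum_half_numerator_shift (a : ℕ) (ha : 0 < a) (c γ : ℤ) (hc : Int.gcd c a = 1) :
    drSum c a (((c : ℝ) * (γ : ℝ) + 1/2) / a) 0
      = drSum c a ((c : ℝ) * (γ : ℝ) / a) 0 + (1/2) * sawtooth ((γ : ℝ) / a) := by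
  have hcop : IsCoprime (a : ℤ) c := by
    rw [Int.isCoprime_iff_gcd_eq_one, Int.gcd_comm, hc]
  have hshift : ∀ j : ℕ, sawtooth (((c : ℝ) * γ + 1 / 2) / a + c * j / a)
      = sawtooth ((c : ℝ) * γ / a + c * j / a) + 1 / (2 * a)
        - if (a : ℤ) ∣ γ + j then 1 / 2 else 0 := by
    intro j
    have hdvd : (a : ℤ) ∣ c * (γ + j) ↔ (a : ℤ) ∣ γ + j :=
      ⟨hcop.dvd_of_dvd_mul_left, (·.mul_left c)⟩
    rw [show ((c : ℝ) * γ + 1 / 2) / a + c * j / a = (((c * (γ + j) : ℤ) : ℝ) + 1 / 2) / a by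
        push_cast; ring,
      show (c : ℝ) * γ / a + c * j / a = ((c * (γ + j) : ℤ) : ℝ) / a by push_cast; ring,
      sawtooth_intCast_add_half_div ha]
    simp only [hdvd]
  have hpeak : sawtooth ((((-γ) % a).toNat : ℝ) / a) = -sawtooth ((γ : ℝ) / a) := by
    rw [← Int.cast_natCast, Int.toNat_of_nonneg (Int.emod_nonneg _ (by omega)),
      sawtooth_intCast_emod_div, Int.cast_neg, neg_div, sawtooth_neg]
  simp only [drSum, add_zero]
  simp only [hshift, add_mul, sub_mul, ite_mul, zero_mul, sum_add_distrib, sum_sub_distrib,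
    ← mul_sum, sum_range_sawtooth_div, sum_range_ite_dvd_add ha, hpeak]
  ring
end

section
/- Let a be a positive integer, b an integer coprime to a, b' an integer with b·b' ≡ 1 (mod a), and γ, δ integers with γ + δ ≡ −1 (mod a). Then, as complex numbers, s(b, a; γ/a, 0) + s(b, a; δ/a, 0) + (1/2)·((b'·γ/a)) + (1/2)·((b'·δ/a)) = −λ(b, a; γ) − λ(b, a; δ). -/
open scoped BigOperators

/-!
Everything is transported to `ZMod a`. The discrete Fourier transform of `j ↦ ((j / a))` is
`k ↦ c (ω ^ k)` with `c z = (1 + z) / (2 (1 - z))`, so by Fourier inversion `s(b, a; n/a, 0)` and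
`((b' n / a))` (after the substitution `k ↦ b k`) are averages over `k` of `ω ^ (k n)` times
`c (ω ^ k) c (ω ^ (b k))`, resp. `c (ω ^ (b k))`. A rational identity in `c` turns
`s(b, a; n/a, 0) + ((b' n / a)) / 2` into
`-λ(b, a; n) + (1 / 2a) ∑ₖ ω ^ (k n) / (1 - ω ^ (-k))`, and under `k ↦ -k` these remainders
for `n = γ` and `n = δ` cancel because `γ + δ ≡ -1`.
-/

open Finset ZMod AddChar

section

variable {a : ℕ}

theorem Finset.sum_range_natCast_mul_pow {K : Type*} [Field K] {x : K} (hx : x ≠ 1)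
    (hxa : x ^ a = 1) : ∑ j ∈ range a, (j : K) * x ^ j = a / (x - 1) := by
  have hgeom : ∑ j ∈ range a, x ^ j = 0 := by rw [geom_sum_eq hx, hxa, sub_self, zero_div]
  have htel : ∑ j ∈ range a, ((j + 1 : ℕ) * x ^ (j + 1) - j * x ^ j : K) = a := by
    rw [sum_range_sub (fun j => (j : K) * x ^ j), hxa]; simp
  rw [eq_div_iff (sub_ne_zero.mpr hx), sum_mul, ← htel, ← sub_eq_zero, ← sum_sub_distrib]
  calc _ = -(x * ∑ j ∈ range a, x ^ j) := by
          rw [mul_sum, ← sum_neg_distrib]; refine sum_congr rfl fun j _ => ?_; push_cast; ring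
    _ = 0 := by rw [hgeom, mul_zero, neg_zero]

variable [NeZero a]

theorem Finset.sum_range_eq_sum_zmod {M : Type*} [AddCommMonoid M] (f : ZMod a → M) :
    ∑ j ∈ range a, f j = ∑ x : ZMod a, f x :=
  sum_nbij' (fun j => (j : ZMod a)) (fun x => x.val) (by simp) (by simp [val_lt])
    (fun j hj => val_cast_of_lt (mem_range.mp hj)) (fun x _ => natCast_zmod_val x) (fun _ _ => rfl)

noncomputable def sawtoothZMod (x : ZMod a) : ℂ := sawtooth (x.val / a)

theorem sawtooth_intCast_div (n : ℤ) : (sawtooth (n / a) : ℂ) = sawtoothZMod (n : ZMod a) := by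
  have : Int.fract ((n : ℝ) / a) = Int.fract (((n : ZMod a).val : ℝ) / a) := by
    rw [Int.fract_div_intCast_eq_div_intCast_mod, Int.fract_eq_self.mpr]
    · rw [← val_intCast]; rfl
    have ha : (0 : ℝ) < a := by exact_mod_cast (NeZero.pos a)
    exact ⟨by positivity, (div_lt_one ha).mpr (by exact_mod_cast val_lt _)⟩
  rw [sawtoothZMod, sawtooth, sawtooth, this]

theorem sawtoothZMod_natCast {j : ℕ} (hj : j < a) :
    sawtoothZMod (j : ZMod a) = if j = 0 then 0 else (j : ℂ) / a - 1 / 2 := by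
  have ha : (0 : ℝ) < a := by exact_mod_cast (NeZero.pos a)
  have hfract : Int.fract ((j : ℝ) / a) = j / a :=
    Int.fract_eq_self.mpr ⟨by positivity, (div_lt_one ha).mpr (by exact_mod_cast hj)⟩
  rw [sawtoothZMod, val_cast_of_lt hj, sawtooth, hfract]
  by_cases h : j = 0 <;> simp [h, ha.ne']

/-- For `z = exp (i θ)` this is `(i / 2) cot (θ / 2)`. At `z = 1` the division by zero gives `0`,
which is the correct coefficient: the sawtooth has mean zero. -/
noncomputable def cotKernel (z : ℂ) : ℂ := (1 + z) / (2 * (1 - z))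

theorem cotKernel_inv {z : ℂ} (hz : z ≠ 0) : cotKernel z⁻¹ = -cotKernel z := by
  rcases eq_or_ne z 1 with rfl | hz1
  · simp [cotKernel]
  have : 1 - z ≠ 0 := sub_ne_zero.mpr hz1.symm
  have : z - 1 ≠ 0 := sub_ne_zero.mpr hz1
  rw [cotKernel, cotKernel]; field_simp; ring

theorem sum_range_sawtoothZMod_mul_pow {x : ℂ} (hxa : x ^ a = 1) :
    ∑ j ∈ range a, sawtoothZMod (j : ZMod a) * x ^ j = -cotKernel x := by
  have ha : (a : ℂ) ≠ 0 := NeZero.ne _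
  have hterm : ∀ j ∈ range a, sawtoothZMod (j : ZMod a) * x ^ j
      = (j : ℂ) * x ^ j / a - x ^ j / 2 + if j = 0 then 1 / 2 else 0 := by
    intro j hj
    rw [sawtoothZMod_natCast (mem_range.mp hj)]
    split_ifs with h <;> simp [h]; ring
  rw [sum_congr rfl hterm, sum_add_distrib, sum_ite_eq' _ _ (fun _ => (1 / 2 : ℂ)),
    if_pos (mem_range.mpr (NeZero.pos a)), sum_sub_distrib, ← sum_div, ← sum_div]
  rcases eq_or_ne x 1 with rfl | hx1
  · have hgauss := congrArg (Nat.cast : ℕ → ℂ) (sum_range_id_mul_two a)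
    push_cast [Nat.cast_sub (NeZero.one_le)] at hgauss
    simp only [one_pow, mul_one, sum_const, card_range, nsmul_eq_mul, cotKernel]
    field_simp
    linear_combination hgauss
  · rw [sum_range_natCast_mul_pow hx1 hxa, geom_sum_eq hx1, hxa, cotKernel]
    have : 1 - x ≠ 0 := sub_ne_zero.mpr hx1.symm
    have : x - 1 ≠ 0 := sub_ne_zero.mpr hx1
    field_simp; ring

theorem ZMod.stdAddChar_ne_zero (k : ZMod a) : stdAddChar k ≠ 0 := by
  rw [stdAddChar_apply]; exact Circle.coe_ne_zero _

theorem dft_sawtoothZMod : 𝓕 (sawtoothZMod (a := a)) = fun k => cotKernel (stdAddChar k) := by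
  ext k
  have hpow : ∀ j : ℕ, stdAddChar (-((j : ZMod a) * k)) = stdAddChar (-k) ^ j := fun j => by
    rw [← map_nsmul_eq_pow, nsmul_eq_mul, mul_neg]
  have hroot : stdAddChar (-k) ^ a = 1 := by
    rw [← map_nsmul_eq_pow, nsmul_eq_mul, natCast_self, zero_mul, map_zero_eq_one]
  rw [dft_apply, ← sum_range_eq_sum_zmod (fun j => stdAddChar (-(j * k)) • sawtoothZMod j)]
  simp only [smul_eq_mul, hpow, mul_comm (stdAddChar (-k) ^ _)]
  rw [sum_range_sawtoothZMod_mul_pow hroot, map_neg_eq_inv,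
    cotKernel_inv (stdAddChar_ne_zero k), neg_neg]

theorem sawtoothZMod_eq_sum (y : ZMod a) :
    sawtoothZMod y =
      (a : ℂ)⁻¹ * ∑ k : ZMod a, stdAddChar (k * y) * cotKernel (stdAddChar k) := by
  have h := congrFun ((𝓕 : (ZMod a → ℂ) ≃ₗ[ℂ] _).symm_apply_apply sawtoothZMod) y
  rw [invDFT_apply, dft_sawtoothZMod] at h
  simpa only [smul_eq_mul] using h.symm

theorem sum_sawtoothZMod_mul (m : ZMod a) :
    ∑ x : ZMod a, sawtoothZMod x * stdAddChar (x * m) = -cotKernel (stdAddChar m) := by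
  have h := congrFun dft_sawtoothZMod (-m)
  rw [dft_apply, map_neg_eq_inv, cotKernel_inv (stdAddChar_ne_zero m)] at h
  simpa only [mul_neg, neg_neg, smul_eq_mul, mul_comm (stdAddChar _)] using h

theorem sum_sawtoothZMod_add_mul_mul (b n : ZMod a) :
    ∑ x : ZMod a, sawtoothZMod (n + b * x) * sawtoothZMod x = -(a : ℂ)⁻¹ * ∑ k : ZMod a,
      stdAddChar (k * n) * cotKernel (stdAddChar k) * cotKernel (stdAddChar (k * b)) := by
  have hsplit : ∀ k x : ZMod a,
      stdAddChar (k * (n + b * x)) = stdAddChar (k * n) * stdAddChar (x * (k * b)) := by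
    intro k x; rw [← map_add_eq_mul]; ring_nf
  calc _ = (a : ℂ)⁻¹ * ∑ k : ZMod a, stdAddChar (k * n) * cotKernel (stdAddChar k) *
        ∑ x : ZMod a, sawtoothZMod x * stdAddChar (x * (k * b)) := by
        simp_rw [sawtoothZMod_eq_sum (n + b * _), hsplit, mul_sum, sum_mul]
        rw [sum_comm]
        exact sum_congr rfl fun k _ => sum_congr rfl fun x _ => by ring
    _ = _ := by simp_rw [sum_sawtoothZMod_mul, mul_neg, sum_neg_distrib]; ring

theorem sawtoothZMod_mul_eq_sum {b b' : ZMod a} (hbb' : b * b' = 1) (n : ZMod a) :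
    sawtoothZMod (b' * n) = (a : ℂ)⁻¹ *
      ∑ k : ZMod a, stdAddChar (k * n) * cotKernel (stdAddChar (k * b)) := by
  rw [sawtoothZMod_eq_sum]
  congr 1
  refine (Fintype.sum_equiv (Units.mulRight (Units.mkOfMulEqOne b b' hbb')) _ _ fun k => ?_).symm
  rw [Units.mulRight_apply, Units.val_mkOfMulEqOne, mul_assoc, ← mul_assoc b, hbb', one_mul]

theorem neg_cotKernel_mul_add_half_cotKernel {z w : ℂ} (hz : z ≠ 0) (hw : w ≠ 0)
    (h1 : z = 1 ↔ w = 1) :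
    -(cotKernel z * cotKernel w) + cotKernel w / 2
      = -(1 / ((1 - z⁻¹) * (1 - w⁻¹))) + 1 / (1 - z⁻¹) / 2 := by
  by_cases hz1 : z = 1
  · simp [hz1, h1.mp hz1, cotKernel]
  have hw1 : w ≠ 1 := fun h => hz1 (h1.mpr h)
  have : 1 - z ≠ 0 := sub_ne_zero.mpr (Ne.symm hz1)
  have : 1 - w ≠ 0 := sub_ne_zero.mpr (Ne.symm hw1)
  have : z - 1 ≠ 0 := sub_ne_zero.mpr hz1
  have : w - 1 ≠ 0 := sub_ne_zero.mpr hw1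
  rw [cotKernel, cotKernel]
  field_simp
  ring

theorem sum_div_one_sub_add_sum_eq_zero {γ δ : ZMod a} (h : γ + δ = -1) :
    ∑ k : ZMod a, stdAddChar (k * γ) / (1 - stdAddChar (-k))
      + ∑ k : ZMod a, stdAddChar (k * δ) / (1 - stdAddChar (-k)) = 0 := by
  rw [← Fintype.sum_equiv (Equiv.neg _) (fun k => stdAddChar (-k * δ) / (1 - stdAddChar k))
    (fun k => stdAddChar (k * δ) / (1 - stdAddChar (-k))) fun k => by simp, ← sum_add_distrib]
  refine sum_eq_zero fun k _ => ?_
  have hδ : -k * δ = k * γ + k := by linear_combination (-k) * h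
  rw [hδ, map_add_eq_mul, map_neg_eq_inv]
  have hz := stdAddChar_ne_zero k
  by_cases hz1 : stdAddChar k = 1
  · simp [hz1]
  have : 1 - stdAddChar k ≠ 0 := sub_ne_zero.mpr (Ne.symm hz1)
  have : stdAddChar k - 1 ≠ 0 := sub_ne_zero.mpr hz1
  field_simp
  ring

theorem drSum_intCast_div (b n : ℤ) :
    (drSum b a (n / a) 0 : ℂ) =
      ∑ x : ZMod a, sawtoothZMod (n + b * x : ZMod a) * sawtoothZMod x := by
  rw [drSum, ← sum_range_eq_sum_zmod, Complex.ofReal_sum]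
  refine sum_congr rfl fun j _ => ?_
  have harg : (n : ℝ) / a + b * ((j : ℝ) + 0) / a = ((n + b * j : ℤ) : ℝ) / a := by
    push_cast; ring
  have hj : ((j : ℝ) + 0) / a = ((j : ℤ) : ℝ) / a := by simp
  rw [harg, hj, Complex.ofReal_mul, sawtooth_intCast_div, sawtooth_intCast_div]
  push_cast
  rfl

theorem lamSum_eq_sum_zmod (b n : ℤ) :
    lamSum b a n = (a : ℂ)⁻¹ * ∑ x : ZMod a, stdAddChar (n * x : ZMod a) /
      ((1 - stdAddChar (-x)) * (1 - stdAddChar (-(b * x : ZMod a)))) := by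
  have hexp : ∀ m : ℤ,
      Complex.exp (2 * Real.pi * Complex.I / a) ^ m = stdAddChar (m : ZMod a) := by
    intro m; rw [stdAddChar_coe, ← Complex.exp_int_mul]; ring_nf
  rw [lamSum, one_div, ← sum_range_eq_sum_zmod]
  congr 1
  -- the extra `j = 0` term vanishes as a division by zero
  refine sum_subset (fun j hj => mem_range.mpr (mem_Ioo.mp hj).2) (fun j hja hj => ?_) |>.trans ?_
  · obtain rfl : j = 0 := by simp only [mem_range, mem_Ioo, not_and, not_lt] at hja hj; omega
    simp
  · refine sum_congr rfl fun j _ => ?_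
    simp only [hexp]
    push_cast
    rfl

theorem sum_sawtoothZMod_add_half {b b' : ZMod a} (hbb' : b * b' = 1) (n : ZMod a) :
    ∑ x : ZMod a, sawtoothZMod (n + b * x) * sawtoothZMod x + sawtoothZMod (b' * n) / 2
      = -((a : ℂ)⁻¹ * ∑ x : ZMod a,
          stdAddChar (n * x) / ((1 - stdAddChar (-x)) * (1 - stdAddChar (-(b * x)))))
        + (2 * a : ℂ)⁻¹ * ∑ k : ZMod a, stdAddChar (k * n) / (1 - stdAddChar (-k)) := by
  have hunit : ∀ k : ZMod a, stdAddChar k = 1 ↔ stdAddChar (k * b) = 1 := by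
    intro k
    rw [← map_zero_eq_one (stdAddChar (N := a)), injective_stdAddChar.eq_iff,
      injective_stdAddChar.eq_iff]
    refine ⟨fun hk => by rw [hk, zero_mul], fun hkb => ?_⟩
    simpa [mul_assoc, hbb'] using congrArg (· * b') hkb
  have hterm : ∀ k : ZMod a,
      stdAddChar (n * k) / ((1 - stdAddChar (-k)) * (1 - stdAddChar (-(b * k))))
        = stdAddChar (k * n) * cotKernel (stdAddChar k) * cotKernel (stdAddChar (k * b))
          - stdAddChar (k * n) * cotKernel (stdAddChar (k * b)) / 2
          + stdAddChar (k * n) / (1 - stdAddChar (-k)) / 2 := by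
    intro k
    have h := neg_cotKernel_mul_add_half_cotKernel (stdAddChar_ne_zero k)
      (stdAddChar_ne_zero (k * b)) (hunit k)
    rw [← map_neg_eq_inv, ← map_neg_eq_inv] at h
    rw [mul_comm n, mul_comm b]
    linear_combination stdAddChar (k * n) * h
  rw [sum_sawtoothZMod_add_mul_mul, sawtoothZMod_mul_eq_sum hbb',
    sum_congr rfl fun k _ => hterm k, sum_add_distrib, sum_sub_distrib, ← sum_div, ← sum_div]
  ring

theorem drSum_add_half_sawtooth {b b' : ℤ} (hbb' : (b * b' : ZMod a) = 1) (n : ℤ) :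
    (drSum b a (n / a) 0 : ℂ) + sawtooth (b' * n / a) / 2
      = -lamSum b a n + (2 * a : ℂ)⁻¹ *
        ∑ k : ZMod a, stdAddChar (k * n : ZMod a) / (1 - stdAddChar (-k)) := by
  have hsaw : (sawtooth (b' * n / a) : ℂ) = sawtoothZMod (b' * n : ZMod a) := by
    simpa using sawtooth_intCast_div (a := a) (b' * n)
  rw [drSum_intCast_div, hsaw, lamSum_eq_sum_zmod]
  exact sum_sawtoothZMod_add_half hbb' n

end

theorem drSum_pair_eq_neg_lam_pair_general (a : ℕ) (ha : 0 < a) (b b' γ δ : ℤ)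
    (hbb' : b * b' ≡ 1 [ZMOD (a : ℤ)])
    (hγδ : γ + δ ≡ -1 [ZMOD (a : ℤ)]) :
    ((drSum b a ((γ : ℝ) / a) 0 + drSum b a ((δ : ℝ) / a) 0
        + (1/2) * sawtooth ((b' : ℝ) * (γ : ℝ) / a)
        + (1/2) * sawtooth ((b' : ℝ) * (δ : ℝ) / a) : ℝ) : ℂ)
      = - lamSum b a γ - lamSum b a δ := by
  have : NeZero a := ⟨ha.ne'⟩
  have hbb'' : (b * b' : ZMod a) = 1 := by
    simpa using (ZMod.intCast_eq_intCast_iff (b * b') 1 a).mpr hbb'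
  have hγδ' : (γ + δ : ZMod a) = -1 := by
    simpa using (ZMod.intCast_eq_intCast_iff (γ + δ) (-1) a).mpr hγδ
  push_cast
  linear_combination drSum_add_half_sawtooth hbb'' γ + drSum_add_half_sawtooth hbb'' δ
    + (2 * a : ℂ)⁻¹ * sum_div_one_sub_add_sum_eq_zero hγδ'

theorem drSum_pair_eq_neg_lam_pair (a : ℕ) (ha : 0 < a) (b b' γ δ : ℤ)
    (hb : Int.gcd b a = 1) (hbb' : b * b' ≡ 1 [ZMOD (a : ℤ)])
    (hγδ : γ + δ ≡ -1 [ZMOD (a : ℤ)]) :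
    ((drSum b a ((γ : ℝ) / a) 0 + drSum b a ((δ : ℝ) / a) 0
        + (1/2) * sawtooth ((b' : ℝ) * (γ : ℝ) / a)
        + (1/2) * sawtooth ((b' : ℝ) * (δ : ℝ) / a) : ℝ) : ℂ)
      = - lamSum b a γ - lamSum b a δ :=
  drSum_pair_eq_neg_lam_pair_general a ha b b' γ δ hbb' hγδ
end

section
/- Let a be a positive integer, b an integer coprime to a, b' an integer with b·b' ≡ 1 (mod a), and n an integer. Then, as complex numbers, λ(b, a; n) = −s(b, a; n/a, 0) + (a − 1)/(4a) − (1/2)·{n/a} − (1/2)·((b'·n/a)). -/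
open scoped BigOperators

section Aux
open Finset

lemma sum_mul_pow (η : ℂ) (m : ℕ) :
    (η - 1) * ∑ k ∈ range m, (k:ℂ) * η^k
      = m * η^m - ∑ k ∈ range m, η^k + 1 - η^m := by
  induction m with
  | zero => simp
  | succ m ih =>
    rw [Finset.sum_range_succ, Finset.sum_range_succ, mul_add, ih]
    push_cast
    ring

lemma inv_one_sub (η : ℂ) (a : ℕ) (ha : 0 < a) (hη : η ≠ 1) (hpow : η^a = 1) :
    (1 - η)⁻¹ = -(1/a) * ∑ k ∈ range a, (k:ℂ)*η^k := by
  have hg : ∑ k ∈ range a, η^k = 0 := by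
    rw [geom_sum_eq hη a, hpow]; simp
  have h1 := sum_mul_pow η a
  rw [hg, hpow] at h1
  have ha' : (a:ℂ) ≠ 0 := Nat.cast_ne_zero.2 ha.ne'
  have hne : (1:ℂ) - η ≠ 0 := sub_ne_zero.2 hη.symm
  rw [inv_eq_one_div]
  field_simp
  linear_combination -h1

lemma dvd_iff_eq_mod (a : ℕ) (ha : 0 < a) (x : ℤ) (k : ℕ) (hk : k < a) :
    (a:ℤ) ∣ (x - k) ↔ (k:ℤ) = x % a := by
  have ha' : (0:ℤ) < a := by exact_mod_cast ha
  have h0 : 0 ≤ x % a := Int.emod_nonneg x ha'.ne'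
  have h1 : x % a < a := Int.emod_lt_of_pos x ha'
  have hd : (a:ℤ) ∣ (x - x % a) := Int.dvd_self_sub_of_emod_eq rfl
  have hk' : (k:ℤ) < a := by exact_mod_cast hk
  have hk0 : (0:ℤ) ≤ k := Int.ofNat_nonneg k
  constructor
  · intro h
    have h3 := dvd_sub hd h
    have he : x - x % ↑a - (x - ↑k) = -(x % a - k) := by ring
    rw [he, dvd_neg] at h3
    have := Int.eq_zero_of_abs_lt_dvd h3 (by rw [abs_lt]; omega)
    omega
  · intro h
    rw [h]; exact hd

lemma range_eq_insert_Ioo (a : ℕ) (ha : 0 < a) : range a = insert 0 (Ioo 0 a) := by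
  ext j; simp only [mem_range, mem_insert, mem_Ioo]; omega

lemma sum_Ioo_zpow (a : ℕ) (ha : 0 < a) (m : ℤ) :
    ∑ j ∈ Ioo 0 a, Complex.exp (2 * Real.pi * Complex.I / a) ^ ((j:ℤ) * m)
      = (if (a:ℤ) ∣ m then (a:ℂ) else 0) - 1 := by
  set ζ := Complex.exp (2 * Real.pi * Complex.I / a) with hζ
  have hprim : IsPrimitiveRoot ζ a := Complex.isPrimitiveRoot_exp a ha.ne'
  have key : ∑ j ∈ range a, ζ ^ ((j:ℤ) * m) = if (a:ℤ) ∣ m then (a:ℂ) else 0 := by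
    have hrw : ∀ j : ℕ, ζ ^ ((j:ℤ)*m) = (ζ^m)^j := by
      intro j; rw [mul_comm, zpow_mul, zpow_natCast]
    simp_rw [hrw]
    by_cases hdvd : (a:ℤ) ∣ m
    · have h1 : ζ ^ m = 1 := (hprim.zpow_eq_one_iff_dvd m).2 hdvd
      simp [h1, hdvd]
    · have hne : ζ ^ m ≠ 1 := fun h => hdvd ((hprim.zpow_eq_one_iff_dvd m).1 h)
      rw [geom_sum_eq hne]
      have hpa : (ζ^m)^a = 1 := by
        rw [← zpow_natCast, ← zpow_mul, mul_comm, zpow_mul, zpow_natCast,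
          hprim.pow_eq_one, one_zpow]
      rw [hpa]
      simp [hdvd]
  rw [range_eq_insert_Ioo a ha, Finset.sum_insert (by simp)] at key
  simp only [Nat.cast_zero, zero_mul, zpow_zero] at key
  linear_combination key

lemma lamSum_eq_modsum (a : ℕ) (ha : 0 < a) (b n : ℤ) (hb : Int.gcd b a = 1) :
    lamSum b a n = (1/(a:ℂ)^2) * (∑ l ∈ range a, (((n - b*l) % a : ℤ) : ℂ) * l)
      - ((a:ℂ)-1)^2/(4*(a:ℂ)) := by
  have ha' : (a:ℂ) ≠ 0 := Nat.cast_ne_zero.2 ha.ne'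
  have haZ : (0:ℤ) < (a:ℤ) := by exact_mod_cast ha
  rw [lamSum]
  set ζ := Complex.exp (2 * Real.pi * Complex.I / a) with hζ
  have hprim : IsPrimitiveRoot ζ a := Complex.isPrimitiveRoot_exp a ha.ne'
  have hζ0 : ζ ≠ 0 := Complex.exp_ne_zero _
  have hcop : IsCoprime (a:ℤ) b := by
    rw [Int.isCoprime_iff_gcd_eq_one, Int.gcd_comm]
    exact hb
  have hstep : ∀ j ∈ Ioo 0 a,
      ζ ^ (n*(j:ℤ)) / ((1 - ζ^(-(j:ℤ))) * (1 - ζ^(-(b*(j:ℤ)))))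
        = (1/(a:ℂ)^2) * ∑ k ∈ range a, ∑ l ∈ range a,
            (k:ℂ) * (l:ℂ) * ζ^((j:ℤ)*(n - (k:ℤ) - b*(l:ℤ))) := by
    intro j hj
    rw [mem_Ioo] at hj
    have hnd1 : ¬ (a:ℤ) ∣ (-(j:ℤ)) := by
      rw [Int.dvd_neg]
      intro hdd
      have h1 : (a:ℤ) ≤ (j:ℤ) := Int.le_of_dvd (by exact_mod_cast hj.1) hdd
      omega
    have hnd2 : ¬ (a:ℤ) ∣ (-(b*(j:ℤ))) := by
      rw [Int.dvd_neg]
      intro hdd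
      have hdj : (a:ℤ) ∣ (j:ℤ) := hcop.dvd_of_dvd_mul_left hdd
      have h1 : (a:ℤ) ≤ (j:ℤ) := Int.le_of_dvd (by exact_mod_cast hj.1) hdj
      omega
    have hne1 : ζ^(-(j:ℤ)) ≠ 1 := fun h => hnd1 ((hprim.zpow_eq_one_iff_dvd _).1 h)
    have hne2 : ζ^(-(b*(j:ℤ))) ≠ 1 := fun h => hnd2 ((hprim.zpow_eq_one_iff_dvd _).1 h)
    have hpa1 : (ζ^(-(j:ℤ)))^a = 1 := by
      rw [← zpow_natCast, ← zpow_mul, mul_comm, zpow_mul, zpow_natCast,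
        hprim.pow_eq_one, one_zpow]
    have hpa2 : (ζ^(-(b*(j:ℤ))))^a = 1 := by
      rw [← zpow_natCast, ← zpow_mul, mul_comm, zpow_mul, zpow_natCast,
        hprim.pow_eq_one, one_zpow]
    rw [div_eq_mul_inv, mul_inv, inv_one_sub _ a ha hne1 hpa1,
      inv_one_sub _ a ha hne2 hpa2]
    have hSS : (∑ k ∈ range a, (k:ℂ) * (ζ ^ (-(j:ℤ))) ^ k) *
        (∑ l ∈ range a, (l:ℂ) * (ζ ^ (-(b*(j:ℤ)))) ^ l)
        = ∑ k ∈ range a, ∑ l ∈ range a,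
            ((k:ℂ) * (ζ ^ (-(j:ℤ))) ^ k) * ((l:ℂ) * (ζ ^ (-(b*(j:ℤ)))) ^ l) :=
      Finset.sum_mul_sum _ _ _ _
    calc ζ ^ (n * (j:ℤ)) *
          ((-(1/(a:ℂ)) * ∑ k ∈ range a, (k:ℂ) * (ζ ^ (-(j:ℤ))) ^ k) *
           (-(1/(a:ℂ)) * ∑ l ∈ range a, (l:ℂ) * (ζ ^ (-(b*(j:ℤ)))) ^ l))
        = (1/(a:ℂ)^2) * (ζ ^ (n * (j:ℤ)) *
            ((∑ k ∈ range a, (k:ℂ) * (ζ ^ (-(j:ℤ))) ^ k) *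
             (∑ l ∈ range a, (l:ℂ) * (ζ ^ (-(b*(j:ℤ)))) ^ l))) := by ring
      _ = (1/(a:ℂ)^2) * ∑ k ∈ range a, ∑ l ∈ range a,
            ζ ^ (n * (j:ℤ)) * (((k:ℂ) * (ζ ^ (-(j:ℤ))) ^ k) * ((l:ℂ) * (ζ ^ (-(b*(j:ℤ)))) ^ l)) := by
          rw [hSS, Finset.mul_sum]
          simp_rw [Finset.mul_sum]
      _ = (1/(a:ℂ)^2) * ∑ k ∈ range a, ∑ l ∈ range a,
            (k:ℂ) * (l:ℂ) * ζ^((j:ℤ)*(n - (k:ℤ) - b*(l:ℤ))) := by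
          congr 1
          refine Finset.sum_congr rfl fun k _ => Finset.sum_congr rfl fun l _ => ?_
          have hz : ζ^(n*(j:ℤ)) * ((ζ^(-(j:ℤ))) ^ k * (ζ^(-(b*(j:ℤ)))) ^ l)
              = ζ^((j:ℤ)*(n - (k:ℤ) - b*(l:ℤ))) := by
            rw [← zpow_natCast (ζ^(-(j:ℤ))) k, ← zpow_mul,
              ← zpow_natCast (ζ^(-(b*(j:ℤ)))) l, ← zpow_mul,
              ← zpow_add₀ hζ0, ← zpow_add₀ hζ0]
            congr 1
            ring
          linear_combination ((k:ℂ) * (l:ℂ)) * hz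
  rw [Finset.sum_congr rfl hstep, ← Finset.mul_sum]
  have hswap : (∑ j ∈ Ioo 0 a, ∑ k ∈ range a, ∑ l ∈ range a,
        (k:ℂ) * (l:ℂ) * ζ^((j:ℤ)*(n - (k:ℤ) - b*(l:ℤ))))
      = ∑ l ∈ range a, ∑ k ∈ range a, ∑ j ∈ Ioo 0 a,
        (k:ℂ) * (l:ℂ) * ζ^((j:ℤ)*(n - (k:ℤ) - b*(l:ℤ))) := by
    calc (∑ j ∈ Ioo 0 a, ∑ k ∈ range a, ∑ l ∈ range a,
          (k:ℂ) * (l:ℂ) * ζ^((j:ℤ)*(n - (k:ℤ) - b*(l:ℤ))))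
        = ∑ k ∈ range a, ∑ j ∈ Ioo 0 a, ∑ l ∈ range a,
          (k:ℂ) * (l:ℂ) * ζ^((j:ℤ)*(n - (k:ℤ) - b*(l:ℤ))) := Finset.sum_comm
      _ = ∑ k ∈ range a, ∑ l ∈ range a, ∑ j ∈ Ioo 0 a,
          (k:ℂ) * (l:ℂ) * ζ^((j:ℤ)*(n - (k:ℤ) - b*(l:ℤ))) :=
          Finset.sum_congr rfl fun k _ => Finset.sum_comm
      _ = ∑ l ∈ range a, ∑ k ∈ range a, ∑ j ∈ Ioo 0 a,
          (k:ℂ) * (l:ℂ) * ζ^((j:ℤ)*(n - (k:ℤ) - b*(l:ℤ))) := Finset.sum_comm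
  rw [hswap]
  have hinner : ∀ l ∈ range a, (∑ k ∈ range a, ∑ j ∈ Ioo 0 a,
        (k:ℂ) * (l:ℂ) * ζ^((j:ℤ)*(n - (k:ℤ) - b*(l:ℤ))))
      = (((n - b*(l:ℤ)) % a : ℤ):ℂ) * (l:ℂ) * a - (∑ k ∈ range a, (k:ℂ)) * l := by
    intro l hl
    have h1 : ∀ k ∈ range a, (∑ j ∈ Ioo 0 a,
          (k:ℂ) * (l:ℂ) * ζ^((j:ℤ)*(n - (k:ℤ) - b*(l:ℤ))))
        = (if (a:ℤ) ∣ ((n - b*(l:ℤ)) - (k:ℤ)) then (k:ℂ)*(l:ℂ)*a else 0) - (k:ℂ)*(l:ℂ) := by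
      intro k _
      rw [← Finset.mul_sum, sum_Ioo_zpow a ha]
      have he : n - (k:ℤ) - b*(l:ℤ) = (n - b*(l:ℤ)) - (k:ℤ) := by ring
      rw [he]
      split <;> ring
    rw [Finset.sum_congr rfl h1, Finset.sum_sub_distrib]
    congr 1
    · set k₀ : ℕ := ((n - b*(l:ℤ)) % a).toNat with hk₀
      have hnn : 0 ≤ (n - b*(l:ℤ)) % a := Int.emod_nonneg _ haZ.ne'
      have hlt : (n - b*(l:ℤ)) % a < a := Int.emod_lt_of_pos _ haZ
      have hmem : k₀ ∈ range a := by rw [mem_range]; omega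
      have hcast : ((n - b*(l:ℤ)) % a) = (k₀:ℤ) := by
        rw [hk₀, Int.toNat_of_nonneg hnn]
      rw [Finset.sum_eq_single_of_mem k₀ hmem]
      · rw [if_pos ((dvd_iff_eq_mod a ha _ k₀ (mem_range.1 hmem)).2 hcast.symm), hcast]
        push_cast
        ring
      · intro k hk hne
        rw [if_neg]
        intro hdd
        have hh := (dvd_iff_eq_mod a ha (n - b*(l:ℤ)) k (mem_range.1 hk)).1 hdd
        exact hne (by omega)
    · rw [← Finset.sum_mul]
  rw [Finset.sum_congr rfl hinner, Finset.sum_sub_distrib, ← Finset.sum_mul, ← Finset.mul_sum]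
  have hG : (∑ k ∈ range a, (k:ℂ)) = (a:ℂ) * ((a:ℂ) - 1) / 2 := by
    have h2 := Finset.sum_range_id_mul_two a
    have h3 := congrArg (Nat.cast : ℕ → ℂ) h2
    push_cast [Nat.cast_sub ha] at h3
    rw [eq_div_iff (two_ne_zero)]
    linear_combination h3
  rw [hG]
  field_simp
  ring


lemma real_side (a : ℕ) (ha : 0 < a) (b b' n : ℤ) (hb : Int.gcd b a = 1)
    (hbb' : b * b' ≡ 1 [ZMOD (a:ℤ)]) :
    (1/(a:ℝ)^2) * (∑ l ∈ range a, (((n - b*l) % a : ℤ):ℝ) * l) - ((a:ℝ)-1)^2/(4*(a:ℝ))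
      = - drSum b a ((n:ℝ)/a) 0 + ((a:ℝ) - 1)/(4*a)
        - (1/2) * Int.fract ((n:ℝ)/a) - (1/2) * sawtooth ((b':ℝ) * (n:ℝ)/a) := by
  have haZ : (0:ℤ) < (a:ℤ) := by exact_mod_cast ha
  have haR : (0:ℝ) < (a:ℝ) := by exact_mod_cast ha
  have haR' : (a:ℝ) ≠ 0 := haR.ne'
  have hbb : (a:ℤ) ∣ (b*b' - 1) := by
    have h := Int.ModEq.dvd hbb'
    have he : (1:ℤ) - b*b' = -(b*b'-1) := by ring
    rw [he, dvd_neg] at h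
    exact h
  set c : ℕ → ℤ := fun j => (n + b*(j:ℤ)) % a with hc
  have hc0 : ∀ j : ℕ, 0 ≤ c j := fun j => Int.emod_nonneg _ haZ.ne'
  have hclt : ∀ j : ℕ, c j < a := fun j => Int.emod_lt_of_pos _ haZ
  -- sawtooth at integer quotients
  have hsaw : ∀ m : ℤ, sawtooth ((m:ℝ)/(a:ℝ))
      = if m % (a:ℤ) = 0 then 0 else ((m % (a:ℤ) : ℤ):ℝ)/(a:ℝ) - 1/2 := by
    intro m
    unfold sawtooth
    rw [Int.fract_div_intCast_eq_div_intCast_mod]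
    by_cases h : m % (a:ℤ) = 0
    · simp [h]
    · rw [if_neg h, if_neg]
      intro h0
      rw [div_eq_zero_iff] at h0
      rcases h0 with h0 | h0
      · exact h (by exact_mod_cast h0)
      · exact haR' h0
  -- drSum rewrite
  have hdr : drSum b a ((n:ℝ)/a) 0 = ∑ j ∈ Ioo 0 a,
      (if c j = 0 then (0:ℝ) else (c j : ℝ)/(a:ℝ) - 1/2) * ((j:ℝ)/(a:ℝ) - 1/2) := by
    unfold drSum
    rw [range_eq_insert_Ioo a ha, Finset.sum_insert (by simp)]
    have h00 : sawtooth (((0:ℝ) + 0)/(a:ℝ)) = 0 := by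
      norm_num [sawtooth]
    rw [show ((0:ℕ):ℝ) + (0:ℝ) = (0:ℝ) + 0 by norm_num]
    rw [h00, mul_zero, zero_add]
    refine Finset.sum_congr rfl fun j hj => ?_
    rw [mem_Ioo] at hj
    have e1 : (n:ℝ)/a + b * ((j:ℝ) + 0)/a = (((n + b*(j:ℤ)):ℤ):ℝ)/(a:ℝ) := by
      push_cast; ring
    have e2 : ((j:ℝ) + 0)/(a:ℝ) = (((j:ℤ)):ℝ)/(a:ℝ) := by push_cast; ring
    rw [e1, e2, hsaw, hsaw]
    have hja : (j:ℤ) % a = (j:ℤ) := Int.emod_eq_of_lt (by positivity) (by exact_mod_cast hj.2)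
    have hjne : ¬((j:ℤ) = 0) := by exact_mod_cast hj.1.ne'
    rw [hja, if_neg hjne]
    norm_cast
  -- split drSum into main part S and correction C
  have hsplit : ∀ j ∈ Ioo 0 a,
      (if c j = 0 then (0:ℝ) else (c j : ℝ)/(a:ℝ) - 1/2) * ((j:ℝ)/(a:ℝ) - 1/2)
        = ((c j : ℝ)/(a:ℝ) - 1/2) * ((j:ℝ)/(a:ℝ) - 1/2)
          + (if c j = 0 then (1/2)*((j:ℝ)/(a:ℝ) - 1/2) else 0) := by
    intro j _
    by_cases h : c j = 0
    · rw [if_pos h, if_pos h, h]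
      push_cast
      ring
    · rw [if_neg h, if_neg h]
      ring
  -- characterize zeros of c
  have hczero : ∀ j : ℕ, j < a → (c j = 0 ↔ (j:ℤ) = (-(b'*n)) % a) := by
    intro j hj
    rw [← dvd_iff_eq_mod a ha _ j hj]
    have hmain : c j = 0 ↔ (a:ℤ) ∣ (n + b*(j:ℤ)) := Int.dvd_iff_emod_eq_zero.symm
    rw [hmain]
    constructor
    · intro h
      have h2 : (a:ℤ) ∣ b'*(n + b*(j:ℤ)) := h.mul_left b'
      have h3 : (a:ℤ) ∣ (b*b' - 1) * (j:ℤ) := hbb.mul_right _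
      have he : (-(b'*n)) - (j:ℤ) = -(b'*(n + b*(j:ℤ))) + (b*b' - 1) * (j:ℤ) := by ring
      rw [he]
      exact dvd_add (dvd_neg.2 h2) h3
    · intro h
      have h2 : (a:ℤ) ∣ b*((-(b'*n)) - (j:ℤ)) := h.mul_left b
      have h3 : (a:ℤ) ∣ (b*b' - 1) * n := hbb.mul_right _
      have he : n + b*(j:ℤ) = -(b*((-(b'*n)) - (j:ℤ))) - (b*b' - 1)*n := by ring
      rw [he]
      exact dvd_sub (dvd_neg.2 h2) h3
  -- the correction sum C
  have hC : (∑ j ∈ Ioo 0 a, if c j = 0 then (1/2)*((j:ℝ)/(a:ℝ) - 1/2) else (0:ℝ))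
      = -(1/2) * sawtooth ((b':ℝ) * (n:ℝ)/(a:ℝ)) := by
    have harg : (b':ℝ) * (n:ℝ)/(a:ℝ) = (((b'*n : ℤ)):ℝ)/(a:ℝ) := by push_cast; ring
    rw [harg, hsaw]
    by_cases hr : (b'*n) % (a:ℤ) = 0
    · rw [if_pos hr, mul_zero]
      refine Finset.sum_eq_zero fun j hj => ?_
      rw [mem_Ioo] at hj
      rw [if_neg]
      rw [hczero j hj.2]
      have hd0 : (-(b'*n)) % (a:ℤ) = 0 :=
        Int.emod_eq_zero_of_dvd (Int.dvd_of_emod_eq_zero hr).neg_right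
      rw [hd0]
      exact_mod_cast hj.1.ne'
    · rw [if_neg hr]
      set d : ℤ := (-(b'*n)) % a with hdd
      set r : ℤ := (b'*n) % a with hrr
      have hd0 : 0 ≤ d := Int.emod_nonneg _ haZ.ne'
      have hdlt : d < a := Int.emod_lt_of_pos _ haZ
      have hr0 : 0 ≤ r := Int.emod_nonneg _ haZ.ne'
      have hrlt : r < a := Int.emod_lt_of_pos _ haZ
      have hdne : d ≠ 0 := by
        intro h0
        apply hr
        rw [hdd] at h0
        rw [hrr]
        exact Int.emod_eq_zero_of_dvd (by simpa using (Int.dvd_of_emod_eq_zero h0).neg_right)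
      have hdvd1 : (a:ℤ) ∣ (-(b'*n) - d) := Int.dvd_self_sub_of_emod_eq rfl
      have hdvd2 : (a:ℤ) ∣ ((b'*n) - r) := Int.dvd_self_sub_of_emod_eq rfl
      have hsum : d + r = a := by
        have h4 : (a:ℤ) ∣ (d + r - a) := by
          have h5 := dvd_add hdvd1 hdvd2
          have he : -(b'*n) - d + (b'*n - r) = -(d + r) := by ring
          rw [he, dvd_neg] at h5
          exact dvd_sub h5 dvd_rfl
        have := Int.eq_zero_of_abs_lt_dvd h4 (by rw [abs_lt]; omega)
        omega
      set j₀ : ℕ := d.toNat with hj₀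
      have hj₀Z : (j₀:ℤ) = d := Int.toNat_of_nonneg hd0
      have hmem : j₀ ∈ Ioo 0 a := by rw [mem_Ioo]; omega
      rw [Finset.sum_eq_single_of_mem j₀ hmem]
      · rw [if_pos (by rw [hczero j₀ (mem_Ioo.1 hmem).2, hj₀Z])]
        have hjr : (j₀:ℝ) = (a:ℝ) - (r:ℝ) := by
          have : ((j₀:ℤ):ℝ) = ((a:ℤ):ℝ) - (r:ℝ) := by
            rw [hj₀Z]; push_cast [← hsum]; ring
          exact_mod_cast this
        rw [hjr]
        field_simp
        ring
      · intro j hj hne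
        rw [if_neg]
        rw [hczero j (mem_Ioo.1 hj).2]
        intro hjd
        exact hne (by omega)
  -- sum of c over range a
  have hUrange : ∑ j ∈ range a, c j = ∑ k ∈ range a, (k:ℤ) := by
    refine Finset.sum_nbij' (fun j => (c j).toNat)
      (fun k => ((b'*((k:ℤ) - n)) % a).toNat) ?_ ?_ ?_ ?_ ?_
    · intro j _
      show (c j).toNat ∈ range a
      rw [mem_range]
      have := hclt j; have := hc0 j; omega
    · intro k _
      show ((b'*((k:ℤ) - n)) % a).toNat ∈ range a
      rw [mem_range]
      have h1 : 0 ≤ (b'*((k:ℤ) - n)) % a := Int.emod_nonneg _ haZ.ne'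
      have h2 : (b'*((k:ℤ) - n)) % a < a := Int.emod_lt_of_pos _ haZ
      omega
    · intro j hj
      rw [mem_range] at hj
      show ((b'*((((c j).toNat):ℤ) - n)) % a).toNat = j
      have h1 : (((c j).toNat:ℤ)) = c j := Int.toNat_of_nonneg (hc0 j)
      have key : (b'*((c j) - n)) % a = (j:ℤ) := by
        symm
        rw [← dvd_iff_eq_mod a ha _ j hj]
        have hmod : (a:ℤ) ∣ (c j - (n + b*(j:ℤ))) := by
          have he0 : c j - (n + b*(j:ℤ)) = -((n + b*(j:ℤ)) - c j) := by ring
          rw [he0, dvd_neg]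
          exact Int.dvd_self_sub_of_emod_eq rfl
        have he : b'*(c j - n) - (j:ℤ) = b'*(c j - (n + b*(j:ℤ))) + (b*b' - 1)*(j:ℤ) := by
          ring
        rw [he]
        exact dvd_add (hmod.mul_left b') (hbb.mul_right _)
      rw [h1, key]
      omega
    · intro k hk
      rw [mem_range] at hk
      show (c (((b'*((k:ℤ) - n)) % a).toNat)).toNat = k
      set w : ℤ := (b'*((k:ℤ) - n)) % a with hw
      have hw0 : 0 ≤ w := Int.emod_nonneg _ haZ.ne'
      have h1 : ((w.toNat:ℤ)) = w := Int.toNat_of_nonneg hw0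
      have key : c (w.toNat) = (k:ℤ) := by
        have hcw : c (w.toNat) = (n + b*w) % a := by rw [hc]; simp only [h1]
        rw [hcw]
        symm
        rw [← dvd_iff_eq_mod a ha _ k hk]
        have hmod : (a:ℤ) ∣ (w - b'*((k:ℤ) - n)) := by
          have he0 : w - b'*((k:ℤ)-n) = -(b'*((k:ℤ)-n) - w) := by ring
          rw [he0, dvd_neg]
          exact Int.dvd_self_sub_of_emod_eq rfl
        have he : n + b*w - (k:ℤ)
            = b*(w - b'*((k:ℤ)-n)) + (b*b'-1)*((k:ℤ)-n) := by ring
        rw [he]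
        exact dvd_add (hmod.mul_left b) (hbb.mul_right _)
      rw [key]
      omega
    · intro j _
      show c j = (((c j).toNat : ℕ) : ℤ)
      exact (Int.toNat_of_nonneg (hc0 j)).symm
  have hGaussZ : 2 * (∑ k ∈ range a, (k:ℤ)) = (a:ℤ)*((a:ℤ)-1) := by
    have h2 := Finset.sum_range_id_mul_two a
    have h3 := congrArg (Nat.cast : ℕ → ℤ) h2
    push_cast [Nat.cast_sub ha] at h3
    linarith
  have hcz : c 0 = n % a := by rw [hc]; simp
  have hUI : 2 * (∑ j ∈ Ioo 0 a, c j) = (a:ℤ)*((a:ℤ)-1) - 2*(n % (a:ℤ)) := by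
    have hr := hUrange
    rw [range_eq_insert_Ioo a ha, Finset.sum_insert (by simp),
      Finset.sum_insert (by simp), hcz] at hr
    rw [range_eq_insert_Ioo a ha, Finset.sum_insert (by simp)] at hGaussZ
    push_cast at hr hGaussZ
    linarith [hGaussZ]
  have hUR : ∑ j ∈ Ioo 0 a, (c j : ℝ)
      = ((a:ℝ)*((a:ℝ)-1) - 2*((n % (a:ℤ) : ℤ):ℝ))/2 := by
    have h3 := congrArg (Int.cast : ℤ → ℝ) hUI
    push_cast at h3
    linarith
  have hJR : ∑ j ∈ Ioo 0 a, (j:ℝ) = (a:ℝ)*((a:ℝ)-1)/2 := by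
    have h2 := Finset.sum_range_id_mul_two a
    have h3 := congrArg (Nat.cast : ℕ → ℝ) h2
    push_cast [Nat.cast_sub ha] at h3
    have h4 : ∑ j ∈ range a, (j:ℝ) = (a:ℝ)*((a:ℝ)-1)/2 := by linarith
    rw [range_eq_insert_Ioo a ha, Finset.sum_insert (by simp)] at h4
    simpa using h4
  -- reindex the left sum
  have hL : (∑ l ∈ range a, (((n - b*l) % a : ℤ):ℝ) * l)
      = (a:ℝ) * (∑ j ∈ Ioo 0 a, (c j:ℝ)) - ∑ j ∈ Ioo 0 a, (j:ℝ)*(c j:ℝ) := by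
    have h1 : (∑ l ∈ range a, (((n - b*l) % a : ℤ):ℝ) * l)
        = ∑ j ∈ Ioo 0 a, (c j:ℝ) * ((a:ℝ) - (j:ℝ)) := by
      rw [range_eq_insert_Ioo a ha, Finset.sum_insert (by simp)]
      simp only [Nat.cast_zero, mul_zero, zero_add]
      refine Finset.sum_nbij' (fun l => a - l) (fun j => a - j) ?_ ?_ ?_ ?_ ?_
      · intro l hl
        rw [mem_Ioo] at hl
        show a - l ∈ Ioo 0 a
        rw [mem_Ioo]; omega
      · intro j hj
        rw [mem_Ioo] at hj
        show a - j ∈ Ioo 0 a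
        rw [mem_Ioo]; omega
      · intro l hl
        rw [mem_Ioo] at hl
        show a - (a - l) = l
        omega
      · intro j hj
        rw [mem_Ioo] at hj
        show a - (a - j) = j
        omega
      · intro l hl
        rw [mem_Ioo] at hl
        show (((n - b*(l:ℤ)) % (a:ℤ) : ℤ):ℝ) * (l:ℝ)
            = (c (a - l) : ℝ) * ((a:ℝ) - ((a - l : ℕ):ℝ))
        have hle : l ≤ a := hl.2.le
        have hmodeq : c (a - l) = (n - b*(l:ℤ)) % a := by
          rw [hc]
          simp only
          have hcast : (((a - l : ℕ)):ℤ) = (a:ℤ) - (l:ℤ) := by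
            push_cast [Nat.cast_sub hle]; ring
          rw [hcast]
          have he : n + b*((a:ℤ) - (l:ℤ)) = (n - b*(l:ℤ)) + (a:ℤ)*b := by ring
          rw [he, Int.add_mul_emod_self_left]
        rw [hmodeq]
        have hcast2 : ((a - l : ℕ):ℝ) = (a:ℝ) - (l:ℝ) := by
          push_cast [Nat.cast_sub hle]; ring
        rw [hcast2]
        ring
    rw [h1]
    have h2 : ∀ j ∈ Ioo 0 a, (c j:ℝ) * ((a:ℝ) - (j:ℝ))
        = (a:ℝ)*(c j:ℝ) - (j:ℝ)*(c j:ℝ) := by intro j _; ring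
    rw [Finset.sum_congr rfl h2, Finset.sum_sub_distrib, ← Finset.mul_sum]
  -- expand S
  have hcard : (((Ioo 0 a).card : ℕ) : ℝ) = (a:ℝ) - 1 := by
    rw [Nat.card_Ioo, Nat.sub_zero]
    push_cast [Nat.cast_sub ha]
    ring
  have hS : (∑ j ∈ Ioo 0 a, ((c j:ℝ)/(a:ℝ) - 1/2) * ((j:ℝ)/(a:ℝ) - 1/2))
      = (1/(a:ℝ)^2) * (∑ j ∈ Ioo 0 a, (j:ℝ)*(c j:ℝ))
        - (1/(2*(a:ℝ))) * (∑ j ∈ Ioo 0 a, (c j:ℝ))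
        - (1/(2*(a:ℝ))) * (∑ j ∈ Ioo 0 a, (j:ℝ)) + ((a:ℝ)-1)*(1/4) := by
    have h2 : ∀ j ∈ Ioo 0 a, ((c j:ℝ)/(a:ℝ) - 1/2) * ((j:ℝ)/(a:ℝ) - 1/2)
        = (1/(a:ℝ)^2) * ((j:ℝ)*(c j:ℝ)) - (1/(2*(a:ℝ)))*(c j:ℝ)
          - (1/(2*(a:ℝ)))*(j:ℝ) + 1/4 := by
      intro j _
      field_simp
      ring
    rw [Finset.sum_congr rfl h2, Finset.sum_add_distrib, Finset.sum_sub_distrib,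
      Finset.sum_sub_distrib, ← Finset.mul_sum, ← Finset.mul_sum, ← Finset.mul_sum,
      Finset.sum_const, nsmul_eq_mul, hcard]
  -- final assembly
  rw [hL, hdr, Finset.sum_congr rfl hsplit, Finset.sum_add_distrib, hC, hS,
    Int.fract_div_intCast_eq_div_intCast_mod, hUR, hJR]
  field_simp
  ring


end Aux

theorem lamSum_eq_drSum_formula (a : ℕ) (ha : 0 < a) (b b' n : ℤ)
    (hb : Int.gcd b a = 1) (hbb' : b * b' ≡ 1 [ZMOD (a : ℤ)]) :
    lamSum b a n
      = ((- drSum b a ((n : ℝ) / a) 0 + ((a : ℝ) - 1) / (4 * a)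
          - (1/2) * Int.fract ((n : ℝ) / a)
          - (1/2) * sawtooth ((b' : ℝ) * (n : ℝ) / a) : ℝ) : ℂ) := by
  rw [lamSum_eq_modsum a ha b n hb, ← real_side a ha b b' n hb hbb']
  push_cast
  ring
end

section
/- Let p be a positive integer, q an integer, and ω = exp(2πi/p). Then, as complex numbers, (1/p)·∑_{k=1}^{p−1} ω^{kq}/(1 − ω^{−k}) = (p − 1)/(2p) − {q/p}. -/
/-!
Write `S_n = ∑_{0<k<p} ω^{kn} / (1 - ω^{-k})`. Both sides of the identity depend on `q` only
through `r = q mod p`. Raising the numerator by one power of `ω^k` adds `ω^{k(n+1)}`, and these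
terms sum to `-1` over `0 < k < p` as long as `p ∤ n + 1`; hence `S_r = S_0 - r` for `r < p`.
Finally `∑_{r<p} S_r = 0`, because `∑_{r<p} ω^{kr} = 0` for each `0 < k < p`, which forces
`2 S_0 = p - 1`.
-/

open Finset

theorem zpow_eq_zpow_emod₀ {G₀ : Type*} [GroupWithZero G₀] {x : G₀} (m : ℤ) {n : ℕ}
    (h : x ^ n = 1) : x ^ m = x ^ (m % (n : ℤ)) := by
  rcases n.eq_zero_or_pos with rfl | hn
  · simp
  have hx : x ≠ 0 := by
    rintro rfl
    simp [zero_pow hn.ne'] at h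
  conv_lhs => rw [← Int.emod_add_mul_ediv m n]
  rw [zpow_add₀ hx, zpow_mul, zpow_natCast, h, one_zpow, mul_one]

theorem pow_succ_div_one_sub_inv {K : Type*} [Field K] {x : K} (hx0 : x ≠ 0) (hx1 : x ≠ 1)
    (n : ℕ) : x ^ (n + 1) / (1 - x⁻¹) = x ^ n / (1 - x⁻¹) + x ^ (n + 1) := by
  have : 1 - x⁻¹ ≠ 0 := sub_ne_zero.mpr (Ne.symm (inv_ne_one.mpr hx1))
  field_simp
  ring

section RootSum

variable {K : Type*} [Field K] {ζ : K} {p : ℕ}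

theorem IsPrimitiveRoot.geom_sum_pow_eq_zero (hζ : IsPrimitiveRoot ζ p) {m : ℕ} (hm : m ≠ 0)
    (hmp : m < p) : ∑ i ∈ range p, (ζ ^ m) ^ i = 0 := by
  rw [geom_sum_eq (hζ.pow_ne_one_of_pos_of_lt hm hmp), ← pow_mul, mul_comm, pow_mul,
    hζ.pow_eq_one, one_pow, sub_self, zero_div]

def rootSum (ζ : K) (p n : ℕ) : K :=
  ∑ k ∈ Ioo 0 p, (ζ ^ k) ^ n / (1 - (ζ ^ k)⁻¹)

theorem IsPrimitiveRoot.rootSum_succ (hζ : IsPrimitiveRoot ζ p) {n : ℕ} (hn : n + 1 < p) :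
    rootSum ζ p (n + 1) = rootSum ζ p n - 1 := by
  have hp : 0 < p := by omega
  have hsum : ∑ k ∈ Ioo 0 p, (ζ ^ k) ^ (n + 1) = -1 := by
    have h := hζ.geom_sum_pow_eq_zero n.succ_ne_zero hn
    rw [range_eq_Ico, ← Ioo_insert_left hp, sum_insert (by simp)] at h
    simp_rw [← pow_mul, mul_comm (n + 1)] at h ⊢
    linear_combination h
  have hζ0 : ζ ≠ 0 := hζ.ne_zero hp.ne'
  unfold rootSum
  rw [sub_eq_add_neg, ← hsum, ← sum_add_distrib]
  refine sum_congr rfl fun k hk => ?_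
  rw [mem_Ioo] at hk
  exact pow_succ_div_one_sub_inv (pow_ne_zero k hζ0) (hζ.pow_ne_one_of_pos_of_lt hk.1.ne' hk.2) n

theorem IsPrimitiveRoot.rootSum_eq_rootSum_zero_sub (hζ : IsPrimitiveRoot ζ p) {n : ℕ}
    (hn : n < p) : rootSum ζ p n = rootSum ζ p 0 - n := by
  induction n with
  | zero => simp
  | succ n ih =>
    rw [hζ.rootSum_succ hn, ih (by omega), Nat.cast_succ]
    ring

theorem IsPrimitiveRoot.sum_range_rootSum (hζ : IsPrimitiveRoot ζ p) :
    ∑ n ∈ range p, rootSum ζ p n = 0 := by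
  unfold rootSum
  rw [sum_comm]
  refine sum_eq_zero fun k hk => ?_
  rw [mem_Ioo] at hk
  rw [← sum_div, hζ.geom_sum_pow_eq_zero hk.1.ne' hk.2, zero_div]

theorem IsPrimitiveRoot.two_mul_rootSum (hζ : IsPrimitiveRoot ζ p) {n : ℕ} (hn : n < p) :
    2 * rootSum ζ p n = p - 1 - 2 * n := by
  have hp : 0 < p := by omega
  have hp0 : (p : K) ≠ 0 := by
    have : NeZero p := ⟨hp.ne'⟩
    exact (hζ.neZero' (R := K)).out
  have hgauss : (∑ m ∈ range p, (m : K)) * 2 = p * (p - 1) := by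
    have h := congrArg (Nat.cast : ℕ → K) (sum_range_id_mul_two p)
    push_cast [Nat.cast_sub hp] at h
    exact h
  have hzero : 2 * rootSum ζ p 0 = p - 1 := by
    have h := hζ.sum_range_rootSum
    rw [sum_congr rfl fun m hm => hζ.rootSum_eq_rootSum_zero_sub (mem_range.mp hm),
      sum_sub_distrib, sum_const, card_range, nsmul_eq_mul] at h
    apply mul_left_cancel₀ hp0
    linear_combination 2 * h + hgauss
  rw [hζ.rootSum_eq_rootSum_zero_sub hn]
  linear_combination hzero

end RootSum

theorem sum_rootOfUnity_div_eq (p : ℕ) (hp : 0 < p) (q : ℤ) :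
    (1 / (p : ℂ)) * ∑ k ∈ Finset.Ioo 0 p,
        Complex.exp (2 * Real.pi * Complex.I / p) ^ ((k : ℤ) * q) /
          (1 - Complex.exp (2 * Real.pi * Complex.I / p) ^ (-(k : ℤ)))
      = (((p : ℝ) - 1) / (2 * p) - Int.fract ((q : ℝ) / p) : ℝ) := by
  set ζ : ℂ := Complex.exp (2 * Real.pi * Complex.I / p)
  have hζ : IsPrimitiveRoot ζ p := Complex.isPrimitiveRoot_exp p hp.ne'
  obtain ⟨r, hr⟩ := Int.eq_ofNat_of_zero_le (Int.emod_nonneg q (Int.natCast_ne_zero.mpr hp.ne'))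
  have hrp : r < p := by
    have := Int.emod_lt_of_pos q (Int.natCast_pos.mpr hp)
    omega
  have hsum : ∑ k ∈ Ioo 0 p, ζ ^ ((k : ℤ) * q) / (1 - ζ ^ (-(k : ℤ))) = rootSum ζ p r := by
    refine sum_congr rfl fun k _ => ?_
    have hperiod : (ζ ^ k) ^ p = 1 := by rw [← pow_mul, mul_comm, pow_mul, hζ.pow_eq_one, one_pow]
    rw [zpow_neg, zpow_mul, zpow_natCast, zpow_eq_zpow_emod₀ q hperiod, hr, zpow_natCast]
  rw [hsum, Int.fract_div_intCast_eq_div_intCast_mod, hr]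
  have hp0 : (p : ℂ) ≠ 0 := Nat.cast_ne_zero.mpr hp.ne'
  push_cast
  field_simp
  linear_combination hζ.two_mul_rootSum hrp
end

section
/- Let m be a positive integer, u an integer with 0 ≤ u ≤ 2m − 1, and z = exp(πi/m). Then, as complex numbers, −(2/m)·( ∑_{k=1}^{2m−1} z^{ku}/(1 − z^{−k}) − ∑_{k=1}^{m−1} z^{2ku}/(1 − z^{−2k}) ) equals −1 if 0 ≤ u ≤ m − 1, and equals 1 if m ≤ u ≤ 2m − 1. -/
/-!
For a primitive `n`-th root of unity `ζ` put `S(u) = ∑_{0<k<n} ζ^(ku) / (1 - ζ^(-k))`.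
Pairing `k` with `n - k` and using `1/(1 - w⁻¹) + 1/(1 - w) = 1` gives `2 S(0) = n - 1`, and
`S(u+1) - S(u) = ∑_{0<k<n} ζ^(k(u+1)) = -1` unless `n ∣ u + 1`; hence `2 S(u) = n - 1 - 2 (u mod n)`.
The bracket in the theorem is `S(u)` for `z` and `n = 2m` minus `S(u)` for `z²` and `n = m`,
that is `m/2 - (u - u mod m) = ± m/2`.
-/

open Finset

section

variable {K : Type*} [Field K]

theorem inv_one_sub_inv_add_inv_one_sub {w : K} (hw0 : w ≠ 0) (hw1 : w ≠ 1) :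
    (1 - w⁻¹)⁻¹ + (1 - w)⁻¹ = 1 := by
  have h2 : w - 1 ≠ 0 := sub_ne_zero.mpr hw1
  field_simp
  ring

theorem mul_div_one_sub_inv {w : K} (hw0 : w ≠ 0) (hw1 : w ≠ 1) (x : K) :
    x * w / (1 - w⁻¹) = x / (1 - w⁻¹) + x * w := by
  have h2 : w - 1 ≠ 0 := sub_ne_zero.mpr hw1
  field_simp
  ring

theorem sum_Ioo_pow_eq_neg_one {x : K} {n : ℕ} (hn : 0 < n) (hx1 : x ≠ 1) (hxn : x ^ n = 1) :
    ∑ k ∈ Ioo 0 n, x ^ k = -1 := by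
  have hgeom : ∑ k ∈ range n, x ^ k = 0 := by
    rw [geom_sum_eq hx1, hxn, sub_self, zero_div]
  rw [range_eq_Ico, sum_eq_sum_Ico_succ_bot hn, pow_zero, Ico_add_one_left_eq_Ioo] at hgeom
  linear_combination hgeom

def sawtoothSum (ζ : K) (n : ℕ) (u : ℤ) : K :=
  ∑ k ∈ Ioo 0 n, ζ ^ ((k : ℤ) * u) / (1 - ζ ^ (-(k : ℤ)))

namespace IsPrimitiveRoot

variable {ζ : K} {n : ℕ}

theorem sawtoothSum_emod (hζ : IsPrimitiveRoot ζ n) (hn : 0 < n) (u : ℤ) :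
    sawtoothSum ζ n (u % n) = sawtoothSum ζ n u := by
  refine sum_congr rfl fun k _ => ?_
  conv_rhs => rw [← Int.emod_add_mul_ediv u n]
  rw [mul_add, zpow_add₀ (hζ.ne_zero hn.ne'), mul_left_comm, zpow_mul ζ n, zpow_natCast,
    hζ.pow_eq_one, one_zpow, mul_one]

theorem two_mul_sawtoothSum_zero (hζ : IsPrimitiveRoot ζ n) (hn : 0 < n) :
    2 * sawtoothSum ζ n 0 = n - 1 := by
  have hinv : ∀ k ∈ Ioo 0 n, (ζ ^ (n - k))⁻¹ = ζ ^ k := fun k hk =>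
    inv_eq_of_mul_eq_one_right <| by rw [pow_sub_mul_pow ζ (mem_Ioo.mp hk).2.le, hζ.pow_eq_one]
  have hreflect : ∑ k ∈ Ioo 0 n, (1 - (ζ ^ k)⁻¹)⁻¹ = ∑ k ∈ Ioo 0 n, (1 - ζ ^ k)⁻¹ := by
    calc ∑ k ∈ Ioo 0 n, (1 - (ζ ^ k)⁻¹)⁻¹ = ∑ k ∈ Ioo 0 n, (1 - (ζ ^ (n - k))⁻¹)⁻¹ := by
          rw [← Ico_add_one_left_eq_Ioo,
            sum_Ico_reflect (fun j => (1 - (ζ ^ j)⁻¹)⁻¹) _ (Nat.le_succ n)]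
          simp
      _ = _ := sum_congr rfl fun k hk => by rw [hinv k hk]
  have hpair : ∀ k ∈ Ioo 0 n, (1 - (ζ ^ k)⁻¹)⁻¹ + (1 - ζ ^ k)⁻¹ = (1 : K) := fun k hk =>
    inv_one_sub_inv_add_inv_one_sub (pow_ne_zero _ (hζ.ne_zero hn.ne'))
      (hζ.pow_ne_one_of_pos_of_lt (mem_Ioo.mp hk).1.ne' (mem_Ioo.mp hk).2)
  simp only [sawtoothSum, mul_zero, zpow_zero, one_div, zpow_neg, zpow_natCast]
  rw [two_mul]
  nth_rewrite 2 [hreflect]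
  rw [← sum_add_distrib, sum_congr rfl hpair, sum_const, Nat.card_Ioo, nsmul_one, Nat.sub_zero,
    Nat.cast_pred hn]

theorem sawtoothSum_add_one (hζ : IsPrimitiveRoot ζ n) (hn : 0 < n) {u : ℤ}
    (hu : ¬ (n : ℤ) ∣ u + 1) : sawtoothSum ζ n (u + 1) = sawtoothSum ζ n u - 1 := by
  have hζ0 := hζ.ne_zero hn.ne'
  have hgeom : ∑ k ∈ Ioo 0 n, (ζ ^ (u + 1)) ^ k = -1 :=
    sum_Ioo_pow_eq_neg_one hn (mt (hζ.zpow_eq_one_iff_dvd _).mp hu) <| by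
      rw [← zpow_natCast, ← zpow_mul, mul_comm, zpow_mul, zpow_natCast, hζ.pow_eq_one, one_zpow]
  rw [sub_eq_add_neg, ← hgeom, sawtoothSum, sawtoothSum, ← sum_add_distrib]
  refine sum_congr rfl fun k hk => ?_
  have hk1 : ζ ^ k ≠ 1 := hζ.pow_ne_one_of_pos_of_lt (mem_Ioo.mp hk).1.ne' (mem_Ioo.mp hk).2
  have hshift : ζ ^ ((k : ℤ) * (u + 1)) = ζ ^ ((k : ℤ) * u) * ζ ^ k := by
    rw [mul_add_one, zpow_add₀ hζ0, zpow_natCast]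
  have hpow : (ζ ^ (u + 1)) ^ k = ζ ^ ((k : ℤ) * u) * ζ ^ k := by
    rw [← zpow_natCast, ← zpow_mul, mul_comm, hshift]
  rw [zpow_neg, zpow_natCast, hshift, hpow, mul_div_one_sub_inv (pow_ne_zero _ hζ0) hk1]

theorem two_mul_sawtoothSum_of_lt (hζ : IsPrimitiveRoot ζ n) (hn : 0 < n) {u : ℤ} (hu0 : 0 ≤ u)
    (hun : u < n) : 2 * sawtoothSum ζ n u = n - 1 - 2 * u := by
  induction u, hu0 using Int.leInduction with
  | base => simpa using hζ.two_mul_sawtoothSum_zero hn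
  | succ u hu0 ih =>
    have hdvd : ¬ (n : ℤ) ∣ u + 1 := fun h => by
      have := Int.eq_zero_of_dvd_of_nonneg_of_lt (by omega) hun h
      omega
    rw [hζ.sawtoothSum_add_one hn hdvd, mul_sub, ih (by omega)]
    push_cast
    ring

theorem two_mul_sawtoothSum (hζ : IsPrimitiveRoot ζ n) (hn : 0 < n) (u : ℤ) :
    2 * sawtoothSum ζ n u = n - 1 - 2 * (u % n : ℤ) := by
  rw [← hζ.sawtoothSum_emod hn, hζ.two_mul_sawtoothSum_of_lt hn (Int.emod_nonneg _ (by omega))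
    (Int.emod_lt_of_pos _ (by omega))]

end IsPrimitiveRoot

end

theorem sum_half_rootOfUnity_eval (m : ℕ) (hm : 0 < m) (u : ℤ)
    (hu0 : 0 ≤ u) (hu1 : u ≤ 2 * m - 1) :
    -(2 / (m : ℂ)) *
        ((∑ k ∈ Finset.Ioo 0 (2 * m),
            Complex.exp (Real.pi * Complex.I / m) ^ ((k : ℤ) * u) /
              (1 - Complex.exp (Real.pi * Complex.I / m) ^ (-(k : ℤ))))
          - ∑ k ∈ Finset.Ioo 0 m,
              Complex.exp (Real.pi * Complex.I / m) ^ (2 * (k : ℤ) * u) /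
                (1 - Complex.exp (Real.pi * Complex.I / m) ^ (-(2 * (k : ℤ)))))
      = if u ≤ (m : ℤ) - 1 then -1 else 1 := by
  set z := Complex.exp (Real.pi * Complex.I / m)
  have hz : IsPrimitiveRoot z (2 * m) := by
    convert Complex.isPrimitiveRoot_exp (2 * m) (by omega) using 2
    push_cast
    field_simp
  have hz2 : IsPrimitiveRoot (z ^ 2) m := hz.pow (by omega) (by ring)
  have hsquare : ∀ c : ℤ, z ^ (2 * c) = (z ^ 2) ^ c := fun c => by
    rw [zpow_mul, zpow_ofNat]
  have hsum₂ : ∑ k ∈ Finset.Ioo 0 m, z ^ (2 * (k : ℤ) * u) / (1 - z ^ (-(2 * (k : ℤ))))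
      = sawtoothSum (z ^ 2) m u := by
    simp only [sawtoothSum, mul_assoc, neg_mul_eq_mul_neg, hsquare]
  have h₁ := hz.two_mul_sawtoothSum_of_lt (by omega) hu0 (by push_cast; omega)
  have h₂ := hz2.two_mul_sawtoothSum hm u
  change -(2 / (m : ℂ)) * (sawtoothSum z (2 * m) u - _) = _
  rw [hsum₂]
  have hm0 : (m : ℂ) ≠ 0 := by exact_mod_cast hm.ne'
  split_ifs with hum
  · rw [Int.emod_eq_of_lt hu0 (by omega)] at h₂
    push_cast at h₁ h₂
    rw [show sawtoothSum z (2 * m) u - sawtoothSum (z ^ 2) m u = m / 2 by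
      linear_combination (h₁ - h₂) / 2]
    field_simp
  · rw [← Int.sub_emod_right, Int.emod_eq_of_lt (by omega) (by omega)] at h₂
    push_cast at h₁ h₂
    rw [show sawtoothSum z (2 * m) u - sawtoothSum (z ^ 2) m u = -(m / 2) by
      linear_combination (h₁ - h₂) / 2]
    field_simp
end

section
/- For every natural number n and all integers a_1, …, a_n, b_1, …, b_n, b, the (n+2)×(n+2) integer matrix A defined by A_{ii} = a_i for 1 ≤ i ≤ n, A_{i,n+1} = b_i and A_{i,n+2} = 0 for 1 ≤ i ≤ n, A_{n+1,j} = 1 for 1 ≤ j ≤ n, A_{n+1,n+1} = b, A_{n+1,n+2} = 2, A_{n+2,n+1} = 2, and all other entries equal to 0, has determinant det A = −4·a_1⋯a_n. -/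
open scoped BigOperators

/-- The `(n+2) × (n+2)` integer matrix with diagonal entries `a i` in the first `n` rows,
column `n` entries `b i` in the first `n` rows, row `n` equal to
`(1, …, 1, c, 2)`, entry `2` in position `(n+1, n)`, and `0` elsewhere. -/
def seifertMatrix (n : ℕ) (a b : Fin n → ℤ) (c : ℤ) :
    Matrix (Fin (n + 2)) (Fin (n + 2)) ℤ :=
  Matrix.of fun i j =>
    if hi : (i : ℕ) < n then
      if (j : ℕ) = (i : ℕ) then a ⟨i, hi⟩
      else if (j : ℕ) = n then b ⟨i, hi⟩
      else 0
    else if (i : ℕ) = n then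
      if (j : ℕ) < n then 1
      else if (j : ℕ) = n then c
      else 2
    else
      if (j : ℕ) = n then 2 else 0

theorem det_seifertMatrix (n : ℕ) (a b : Fin n → ℤ) (c : ℤ) :
    (seifertMatrix n a b c).det = -4 * ∏ i, a i := by
  set A := seifertMatrix n a b c with hA
  have hrow : ∀ j : Fin (n+2), A (Fin.last (n+1)) j = if (j:ℕ) = n then 2 else 0 := by
    intro j
    simp [hA, seifertMatrix, Fin.val_last]
  rw [Matrix.det_succ_row A (Fin.last (n+1))]
  rw [Finset.sum_eq_single (⟨n, by omega⟩ : Fin (n+2))]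
  · have h2 : A (Fin.last (n+1)) ⟨n, by omega⟩ = 2 := by rw [hrow]; simp
    rw [h2]
    set M := A.submatrix (Fin.last (n+1)).succAbove
      ((⟨n, by omega⟩ : Fin (n+2)).succAbove) with hM
    have hMe : ∀ i j : Fin (n+1), M i j =
        A ⟨(i:ℕ), by omega⟩ (if (j:ℕ) < n then ⟨(j:ℕ), by omega⟩ else ⟨(j:ℕ)+1, by omega⟩) := by
      intro i j
      have h1 : (Fin.last (n+1)).succAbove i = ⟨(i:ℕ), by omega⟩ := by
        rw [Fin.succAbove_last]; exact Fin.ext rfl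
      have h2 : ((⟨n, by omega⟩ : Fin (n+2)).succAbove j) =
          (if (j:ℕ) < n then (⟨(j:ℕ), by omega⟩ : Fin (n+2)) else ⟨(j:ℕ)+1, by omega⟩) := by
        simp [Fin.succAbove, Fin.lt_def]
        split <;> simp [Fin.ext_iff]
      rw [hM, Matrix.submatrix_apply, h1, h2]
    have hdetM : M.det = 2 * ∏ i, a i := by
      rw [Matrix.det_succ_column M (Fin.last n)]
      rw [Finset.sum_eq_single (Fin.last n)]
      · have hMl : M (Fin.last n) (Fin.last n) = 2 := by
          rw [hMe]
          simp [hA, seifertMatrix]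
        rw [hMl]
        have hsub : M.submatrix (Fin.last n).succAbove (Fin.last n).succAbove
            = Matrix.diagonal a := by
          ext i j
          have hi : ((Fin.last n).succAbove i : ℕ) = (i:ℕ) := by
            simp
          have hj : ((Fin.last n).succAbove j : ℕ) = (j:ℕ) := by
            simp
          rw [Matrix.submatrix_apply, hMe]
          simp only [hi, hj, hA, seifertMatrix, Matrix.of_apply]
          rcases eq_or_ne i j with h | h
          · subst h
            simp [Matrix.diagonal, i.isLt, Fin.ext_iff]
          · have hij : (i:ℕ) ≠ (j:ℕ) := fun hh => h (Fin.ext hh)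
            have hjn : (j:ℕ) < n := j.isLt
            simp [Matrix.diagonal, h, i.isLt, hjn, hij.symm, Nat.ne_of_lt hjn]
        rw [hsub, Matrix.det_diagonal]
        simp [Fin.val_last]
      · intro i _ hi
        have hin : (i:ℕ) ≠ n := fun hh => hi (Fin.ext (by simp [hh]))
        have hiltn : (i:ℕ) < n := by have := i.isLt; omega
        have : M i (Fin.last n) = 0 := by
          rw [hMe]
          simp [hA, seifertMatrix, hiltn]
          intro h
          exact absurd h (by omega)
        simp [this]
      · simp
    rw [hdetM]
    have : ((Fin.last (n+1) : Fin (n+2)) : ℕ) = n + 1 := rfl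
    rw [this]
    have hodd : Odd (n + 1 + n) := ⟨n, by ring⟩
    rw [hodd.neg_one_pow]
    ring
  · intro j _ hj
    rw [hrow]
    have : (j:ℕ) ≠ n := fun h => hj (Fin.ext h)
    simp [this]
  · simp
end

section
/- For all coprime positive integers m and r, the group presented by generators v, h with relators v·h·v⁻¹·h and v^{2m}·h^{−r} is a finite group of order 4·m·r. -/
/-! Writing `v = of 0` and `h = of 1`, the relations give `v h v⁻¹ = h⁻¹`, and conjugating
`v ^ (2m) = h ^ r` by `v` gives `h ^ (2r) = 1`, hence `v ^ (4m) = 1`. So the presented group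
is a quotient of `ℤ/2r ⋊ ℤ/4m`, where `ℤ/4m` acts by inversion, and the kernel is generated
by the image `v ^ (2m) h ^ (-r)` of the second relator, a central element of order 2.
Conversely this quotient satisfies both relations, so it is isomorphic to the presented group
and has order `2r · 4m / 2 = 4mr`. -/

/-- Relators for the presentation `⟨v, h | vhv⁻¹h, v^{2m}h^{-r}⟩`,
with `v, h` the generators indexed by `0, 1 : Fin 2`. -/
def metacyclicRels (m : ℕ) (r : ℤ) : Set (FreeGroup (Fin 2)) :=
  {FreeGroup.of 0 * FreeGroup.of 1 * (FreeGroup.of 0)⁻¹ * FreeGroup.of 1,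
   FreeGroup.of 0 ^ (2 * m) * FreeGroup.of 1 ^ (-r)}

open Multiplicative

section Cyclic

variable {G : Type*} [Group G] {n : ℕ}

def zmodLift (g : G) (hg : g ^ n = 1) : Multiplicative (ZMod n) →* G :=
  AddMonoidHom.toMultiplicativeLeft <| ZMod.lift n
    ⟨zmultiplesHom (Additive G) (Additive.ofMul g), by simp [← ofMul_pow, hg]⟩

@[simp]
theorem zmodLift_ofAdd_intCast (g : G) (hg : g ^ n = 1) (k : ℤ) :
    zmodLift g hg (ofAdd (k : ZMod n)) = g ^ k := by
  simp [zmodLift]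

@[simp]
theorem zmodLift_ofAdd_one (g : G) (hg : g ^ n = 1) : zmodLift g hg (ofAdd 1) = g := by
  simpa using zmodLift_ofAdd_intCast g hg 1

theorem ofAdd_intCast_eq_zpow (k : ℤ) :
    ofAdd (k : ZMod n) = ofAdd (1 : ZMod n) ^ k := by
  rw [← ofAdd_zsmul, zsmul_one]

theorem ofAdd_one_pow_self : ofAdd (1 : ZMod n) ^ n = 1 := by
  rw [← ofAdd_nsmul, nsmul_one, ZMod.natCast_self, ofAdd_zero]

theorem exists_ofAdd_intCast_eq (x : Multiplicative (ZMod n)) :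
    ∃ k : ℤ, ofAdd (k : ZMod n) = x :=
  ZMod.intCast_surjective x.toAdd

theorem MonoidHom.ext_mzmod {f f' : Multiplicative (ZMod n) →* G}
    (h : f (ofAdd 1) = f' (ofAdd 1)) : f = f' := by
  refine MonoidHom.ext fun x => ?_
  obtain ⟨k, rfl⟩ := exists_ofAdd_intCast_eq x
  rw [ofAdd_intCast_eq_zpow, map_zpow, map_zpow, h]

end Cyclic

theorem MulAut.zpow_apply_zpow_of_apply_eq_inv {G : Type*} [Group G] {σ : MulAut G} {a : G}
    (h : σ a = a⁻¹) (k l : ℤ) : (σ ^ k) (a ^ l) = a ^ ((k.negOnePow : ℤ) * l) := by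
  have h' : σ⁻¹ a = a⁻¹ := by
    have := congrArg (σ⁻¹ : MulAut G) h
    rw [MulAut.inv_apply_self, map_inv] at this
    exact inv_eq_iff_eq_inv.mp this.symm
  induction k using Int.induction_on generalizing l with
  | zero => simp
  | succ k ih =>
    rw [zpow_add_one, MulAut.mul_apply, map_zpow, h, inv_zpow', ih, Int.negOnePow_succ]
    push_cast; ring_nf
  | pred k ih =>
    rw [zpow_sub_one, MulAut.mul_apply, map_zpow, h', inv_zpow', ih, Int.negOnePow_sub,
      Int.negOnePow_one]
    push_cast; ring_nf

section Inversion

variable (A : Type*) [CommGroup A] {n : ℕ}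

theorem MulEquiv.inv_sq : (MulEquiv.inv A : MulAut A) ^ 2 = 1 := by
  ext x
  simp [sq, MulAut.mul_apply]

def inversionAction (hn : Even n) : Multiplicative (ZMod n) →* MulAut A :=
  zmodLift (MulEquiv.inv A) <| by
    obtain ⟨k, rfl⟩ := hn
    rw [← two_mul, pow_mul, MulEquiv.inv_sq, one_pow]

variable {A}

theorem inversionAction_ofAdd_intCast_apply (hn : Even n) (k : ℤ) (x : A) :
    inversionAction A hn (ofAdd k) x = x ^ (k.negOnePow : ℤ) := by
  rw [inversionAction, zmodLift_ofAdd_intCast]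
  simpa using MulAut.zpow_apply_zpow_of_apply_eq_inv (σ := MulEquiv.inv A) (a := x) rfl k 1

theorem inversionAction_apply_eq_self (hn : Even n) (g : Multiplicative (ZMod n)) {x : A}
    (hx : x⁻¹ = x) : inversionAction A hn g x = x := by
  obtain ⟨k, rfl⟩ := exists_ofAdd_intCast_eq g
  rw [inversionAction_ofAdd_intCast_apply]
  rcases Int.isUnit_iff.mp (k.negOnePow).isUnit with h | h <;> simp [h, hx]

theorem inversionAction_sq (hn : Even n) (g : Multiplicative (ZMod n)) :
    inversionAction A hn (g ^ 2) = 1 := by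
  obtain ⟨k, rfl⟩ := exists_ofAdd_intCast_eq g
  rw [map_pow, inversionAction, zmodLift_ofAdd_intCast, ← zpow_natCast, ← zpow_mul, mul_comm,
    zpow_mul, zpow_natCast, MulEquiv.inv_sq, one_zpow]

end Inversion

section InversionSemidirect

open SemidirectProduct

variable {n k : ℕ} (hk : Even k)

local notation "C" => Multiplicative (ZMod n) ⋊[inversionAction _ hk] Multiplicative (ZMod k)

theorem inr_ofAdd_one_mul_inl_mul_inv (x : Multiplicative (ZMod n)) :
    (inr (ofAdd 1) * inl x * (inr (ofAdd 1))⁻¹ : C) = (inl x)⁻¹ := by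
  rw [← map_inv, ← inl_aut, ← Int.cast_one, inversionAction_ofAdd_intCast_apply,
    Int.negOnePow_one, Units.val_neg, Units.val_one, zpow_neg_one, map_inv]

variable {G : Type*} [Group G] {a b : G} (ha : a ^ n = 1) (hb : b ^ k = 1)
  (hab : b * a * b⁻¹ = a⁻¹)

def inversionLift : C →* G :=
  lift (zmodLift a ha) (zmodLift b hb) fun c => by
    refine MonoidHom.ext_mzmod ?_
    obtain ⟨j, rfl⟩ := exists_ofAdd_intCast_eq c
    have hconj : MulAut.conj b a = a⁻¹ := hab
    have key := MulAut.zpow_apply_zpow_of_apply_eq_inv hconj j 1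
    rw [← map_zpow, zpow_one, mul_one] at key
    simp only [MonoidHom.coe_comp, MulEquiv.coe_toMonoidHom, Function.comp_apply,
      zmodLift_ofAdd_intCast, zmodLift_ofAdd_one]
    rw [← Int.cast_one, inversionAction_ofAdd_intCast_apply, Int.cast_one, map_zpow,
      zmodLift_ofAdd_one, key]

@[simp]
theorem inversionLift_inl_ofAdd_one : inversionLift hk ha hb hab (inl (ofAdd 1)) = a := by
  simp [inversionLift]

@[simp]
theorem inversionLift_inr_ofAdd_one : inversionLift hk ha hb hab (inr (ofAdd 1)) = b := by
  simp [inversionLift]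

end InversionSemidirect

namespace SemidirectProduct

theorem inl_mem_center {N G : Type*} [CommGroup N] [Group G] {φ : G →* MulAut N} {x : N}
    (hx : ∀ g, φ g x = x) : inl x ∈ Subgroup.center (N ⋊[φ] G) :=
  Subgroup.mem_center_iff.mpr fun y => by ext <;> simp [hx, mul_comm]

theorem inr_mem_center {N G : Type*} [Group N] [CommGroup G] {φ : G →* MulAut N} {g : G}
    (hg : φ g = 1) : inr g ∈ Subgroup.center (N ⋊[φ] G) :=
  Subgroup.mem_center_iff.mpr fun y => by ext <;> simp [hg, mul_comm]

end SemidirectProduct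

theorem Subgroup.zpowers_normal_of_mem_center {G : Type*} [Group G] {g : G}
    (hg : g ∈ center G) : (zpowers g).Normal :=
  ⟨fun x hx y => by
    rwa [mem_center_iff.mp (zpowers_le.mpr hg hx) y, mul_inv_cancel_right]⟩

namespace Metacyclic

open SemidirectProduct PresentedGroup Subgroup

variable (m r : ℕ)

abbrev Cover : Type :=
  Multiplicative (ZMod (2 * r)) ⋊[inversionAction _ ((by decide : Even 4).mul_right m)]
    Multiplicative (ZMod (4 * m))

def centralInvolution : Cover m r := inr (ofAdd 1) ^ (2 * m) * inl (ofAdd 1) ^ (-(r : ℤ))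

theorem inr_ofAdd_one_pow_mem_center : (inr (ofAdd 1) ^ (2 * m) : Cover m r) ∈ center _ := by
  rw [← map_pow]
  exact inr_mem_center (by rw [pow_mul', inversionAction_sq])

theorem inl_ofAdd_one_zpow_mem_center :
    (inl (ofAdd 1) ^ (-(r : ℤ)) : Cover m r) ∈ center _ := by
  rw [← map_zpow]
  refine inl_mem_center fun g => inversionAction_apply_eq_self _ g ?_
  rw [zpow_neg, inv_inv, zpow_natCast, eq_inv_iff_mul_eq_one, ← pow_add, ← two_mul,
    ofAdd_one_pow_self]

theorem centralInvolution_mem_center : centralInvolution m r ∈ center (Cover m r) :=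
  mul_mem (inr_ofAdd_one_pow_mem_center m r) (inl_ofAdd_one_zpow_mem_center m r)

theorem centralInvolution_sq : centralInvolution m r ^ 2 = 1 := by
  have hcomm : Commute (inr (ofAdd 1) ^ (2 * m) : Cover m r) (inl (ofAdd 1) ^ (-(r : ℤ))) :=
    (mem_center_iff.mp (inr_ofAdd_one_pow_mem_center m r) _).symm
  have h4m : ofAdd (1 : ZMod (4 * m)) ^ (2 * m * 2) = 1 := by
    rw [show 2 * m * 2 = 4 * m by ring, ofAdd_one_pow_self]
  have h2r : (ofAdd (1 : ZMod (2 * r)) ^ (-(r : ℤ))) ^ 2 = 1 := by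
    rw [zpow_neg, inv_pow, zpow_natCast, ← pow_mul, mul_comm, ofAdd_one_pow_self, inv_one]
  rw [centralInvolution, hcomm.mul_pow, ← pow_mul, ← map_pow inr, ← map_zpow inl,
    ← map_pow inl, h4m, h2r, map_one, map_one, mul_one]

theorem centralInvolution_ne_one (hm : 0 < m) : centralInvolution m r ≠ 1 := by
  intro h
  have h2 : rightHom (centralInvolution m r) = 1 := by rw [h, map_one]
  rw [centralInvolution, map_mul, map_pow, map_zpow, rightHom_inr, rightHom_inl, one_zpow, mul_one,
    ← ofAdd_nsmul, nsmul_one, ofAdd_eq_one, ZMod.natCast_eq_zero_iff] at h2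
  exact absurd (Nat.le_of_dvd (by omega) h2) (by omega)

theorem orderOf_centralInvolution (hm : 0 < m) : orderOf (centralInvolution m r) = 2 :=
  orderOf_eq_prime (centralInvolution_sq m r) (centralInvolution_ne_one m r hm)

instance : (zpowers (centralInvolution m r)).Normal :=
  zpowers_normal_of_mem_center (centralInvolution_mem_center m r)

abbrev Model : Type := Cover m r ⧸ zpowers (centralInvolution m r)

theorem card_model (hm : 0 < m) : Nat.card (Model m r) = 4 * m * r := by
  have h := card_eq_card_quotient_mul_card_subgroup (zpowers (centralInvolution m r))
  rw [Nat.card_zpowers, orderOf_centralInvolution m r hm, SemidirectProduct.card,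
    Nat.card_congr toAdd, Nat.card_congr toAdd, Nat.card_zmod, Nat.card_zmod] at h
  linarith

local notation "P" => PresentedGroup (metacyclicRels m (r : ℤ))

theorem of_mul_of_mul_inv : (of 0 : P) * of 1 * (of 0)⁻¹ = (of 1)⁻¹ :=
  mul_eq_one_iff_eq_inv.mp (one_of_mem (Set.mem_insert _ _))

theorem of_pow_mul_of_zpow : (of 0 : P) ^ (2 * m) * of 1 ^ (-(r : ℤ)) = 1 :=
  one_of_mem (Set.mem_insert_of_mem _ rfl)

theorem of_pow_eq_of_pow : (of 0 : P) ^ (2 * m) = of 1 ^ r := by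
  have h := mul_eq_one_iff_eq_inv.mp (of_pow_mul_of_zpow m r)
  rwa [zpow_neg, inv_inv, zpow_natCast] at h

theorem of_one_pow_two_mul : (of 1 : P) ^ (2 * r) = 1 := by
  have hconj : MulAut.conj (of 0 : P) (of 1 ^ r) = (of 1 ^ r)⁻¹ := by
    rw [map_pow, MulAut.conj_apply, of_mul_of_mul_inv, inv_pow]
  have hfix : MulAut.conj (of 0 : P) (of 1 ^ r) = of 1 ^ r := by
    rw [← of_pow_eq_of_pow, MulAut.conj_apply, ← pow_succ', pow_succ, mul_inv_cancel_right]
  rw [hfix, eq_inv_iff_mul_eq_one, ← pow_add, ← two_mul] at hconj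
  exact hconj

theorem of_zero_pow_four_mul : (of 0 : P) ^ (4 * m) = 1 := by
  rw [show 4 * m = 2 * m * 2 by ring, pow_mul, of_pow_eq_of_pow, ← pow_mul, mul_comm,
    of_one_pow_two_mul]

def toModel : P →* Model m r :=
  toGroup (f := ![QuotientGroup.mk (inr (ofAdd 1)), QuotientGroup.mk (inl (ofAdd 1))]) <| by
    rintro w (rfl | rfl)
    · simp only [map_mul, map_inv, FreeGroup.lift_apply_of, Matrix.cons_val_zero,
        Matrix.cons_val_one, ← QuotientGroup.mk_inv, ← QuotientGroup.mk_mul]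
      rw [inr_ofAdd_one_mul_inl_mul_inv, inv_mul_cancel, QuotientGroup.mk_one]
    · simp only [map_mul, map_pow, map_zpow, FreeGroup.lift_apply_of, Matrix.cons_val_zero,
        Matrix.cons_val_one, ← QuotientGroup.mk_pow, ← QuotientGroup.mk_zpow,
        ← QuotientGroup.mk_mul]
      exact (QuotientGroup.eq_one_iff _).mpr (mem_zpowers _)

def ofModel : Model m r →* P :=
  QuotientGroup.lift _
    (inversionLift _ (of_one_pow_two_mul m r) (of_zero_pow_four_mul m r) (of_mul_of_mul_inv m r))
    (zpowers_le.mpr (by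
      rw [MonoidHom.mem_ker, centralInvolution, map_mul, map_pow, map_zpow,
        inversionLift_inr_ofAdd_one, inversionLift_inl_ofAdd_one, of_pow_mul_of_zpow]))

def mulEquivModel : P ≃* Model m r :=
  MonoidHom.toMulEquiv (toModel m r) (ofModel m r)
    (PresentedGroup.ext fun i => by fin_cases i <;> simp [toModel, ofModel, toGroup.of])
    (QuotientGroup.monoidHom_ext _ <| hom_ext
      (MonoidHom.ext_mzmod <| by simp [toModel, ofModel, toGroup.of])
      (MonoidHom.ext_mzmod <| by simp [toModel, ofModel, toGroup.of]))

theorem card_presentedGroup (hm : 0 < m) : Nat.card P = 4 * m * r := by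
  rw [Nat.card_congr (mulEquivModel m r).toEquiv, card_model m r hm]

end Metacyclic

theorem metacyclic_presentedGroup_finite_card_general (m r : ℕ) (hm : 0 < m) (hr : 0 < r) :
    Finite (PresentedGroup (metacyclicRels m (r : ℤ)))
      ∧ Nat.card (PresentedGroup (metacyclicRels m (r : ℤ))) = 4 * m * r := by
  have hcard := Metacyclic.card_presentedGroup m r hm
  exact ⟨Nat.finite_of_card_ne_zero (by rw [hcard]; positivity), hcard⟩

theorem metacyclic_presentedGroup_finite_card (m r : ℕ) (hm : 0 < m) (hr : 0 < r)
    (hmr : Nat.Coprime m r) :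
    Finite (PresentedGroup (metacyclicRels m (r : ℤ)))
      ∧ Nat.card (PresentedGroup (metacyclicRels m (r : ℤ))) = 4 * m * r :=
  metacyclic_presentedGroup_finite_card_general m r hm hr
end

section
/- Let a be a positive integer, b an integer coprime to a, and ω = exp(2πi/a). Then, as complex numbers, ∑_{j=1}^{a−1} ((b·j/a))·((j/a)) = −(1/(4a))·∑_{j=1}^{a−1} (1 + ω^{−j})(1 + ω^{−bj}) / ((1 − ω^{−j})(1 − ω^{−bj})). -/
open scoped BigOperators

/-!
The map `j ↦ ((j/a))` on `ℤ/aℤ` has discrete Fourier transform `∑ⱼ ((j/a)) xʲ = (1 + x)/(2(x - 1))`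
at every `a`-th root of unity `x ≠ 1` (a weighted geometric sum), and `0` at `x = 1`. Expanding
`((bj/a))` by Fourier inversion in powers of `ω`, the sum over `j` against `((j/a))` is again a
Fourier coefficient, so `a · s(b, a) = ∑ₖ c(ωᵏ) c(ω^{-bk})` with `c(x) = (1 + x)/(2(x - 1))`.
Since `(1 + x)/(1 - x) = -2 c(x)` and `c(x⁻¹) = -c(x)`, this is the cotangent formula.
-/

open Finset Function

lemma sum_range_eq_sum_Ioo {M : Type*} [AddCommMonoid M] {f : ℕ → M} (hf : f 0 = 0) (n : ℕ) :
    ∑ j ∈ range n, f j = ∑ j ∈ Ioo 0 n, f j := by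
  rcases n.eq_zero_or_pos with rfl | hn
  · simp
  · rw [range_eq_Ico, ← Ioo_insert_left hn, sum_insert (by simp), hf, zero_add]

lemma sum_range_pow_of_pow_eq_one {K : Type*} [Field K] [DecidableEq K] {x : K} {n : ℕ}
    (hx : x ^ n = 1) : ∑ k ∈ range n, x ^ k = if x = 1 then (n : K) else 0 := by
  split_ifs with h
  · simp [h]
  · rw [geom_sum_eq h, hx, sub_self, zero_div]

lemma sub_one_mul_sum_range_natCast_mul_pow {R : Type*} [CommRing R] (x : R) (n : ℕ) :
    (x - 1) * ∑ j ∈ range n, (j : R) * x ^ j = n * x ^ n - x * ∑ j ∈ range n, x ^ j := by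
  induction n with
  | zero => simp
  | succ n ih =>
    rw [sum_range_succ, sum_range_succ, mul_add, ih]
    push_cast
    ring

lemma sum_range_natCast_mul_two {R : Type*} [CommRing R] (n : ℕ) :
    (∑ j ∈ range n, (j : R)) * 2 = n * (n - 1) := by
  induction n with
  | zero => simp
  | succ n ih =>
    rw [sum_range_succ, add_mul, ih]
    push_cast
    ring

lemma Function.Periodic.sum_range_ite_dvd_sub_s19 {M : Type*} [AddCommMonoid M] {f : ℤ → M} {n : ℕ}
    (hf : Periodic f n) (hn : 0 < n) (m : ℤ) :
    ∑ j ∈ range n, (if (n : ℤ) ∣ j - m then f j else 0) = f m := by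
  have hdvd_eq : ∀ j : ℤ, (n : ℤ) ∣ j - m → f j = f m := by
    rintro j ⟨t, ht⟩
    rw [show j = m + t * n by linarith]
    exact hf.int_mul t m
  have hr : 0 ≤ m % n := Int.emod_nonneg m (by omega)
  have hrn : m % n < n := Int.emod_lt_of_pos m (by omega)
  have hr_dvd : (n : ℤ) ∣ (m % n).toNat - m :=
    ⟨-(m / n), by rw [Int.toNat_of_nonneg hr]; linarith [Int.emod_add_mul_ediv m n]⟩
  rw [sum_eq_single_of_mem (m % n).toNat (by simp; omega), if_pos hr_dvd, hdvd_eq _ hr_dvd]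
  intro j hj hne
  rw [if_neg]
  intro hj_dvd
  have := Int.eq_zero_of_abs_lt_dvd (dvd_sub hj_dvd hr_dvd)
    (by rw [mem_range] at hj; rw [abs_lt]; omega)
  omega

lemma IsPrimitiveRoot.zpow_pow_eq_one {M : Type*} [DivisionCommMonoid M] {ω : M} {n : ℕ}
    (hω : IsPrimitiveRoot ω n) (m : ℤ) : (ω ^ m) ^ n = 1 := by
  rw [← zpow_natCast, zpow_comm, zpow_natCast, hω.pow_eq_one, one_zpow]

theorem IsPrimitiveRoot.inverse_dft_of_periodic {K : Type*} [Field K] {ω : K} {n : ℕ}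
    (hω : IsPrimitiveRoot ω n) (hn : 0 < n) {f : ℤ → K} (hf : Periodic f n) (m : ℤ) :
    ∑ k ∈ range n, (∑ j ∈ range n, f j * (ω ^ k) ^ j) * ω ^ (-(m * k)) = n * f m := by
  classical
  have hω0 : ω ≠ 0 := hω.ne_zero hn.ne'
  calc ∑ k ∈ range n, (∑ j ∈ range n, f j * (ω ^ k) ^ j) * ω ^ (-(m * k))
      = ∑ j ∈ range n, f j * ∑ k ∈ range n, (ω ^ ((j : ℤ) - m)) ^ k := by
        simp_rw [sum_mul, mul_sum]
        rw [sum_comm]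
        refine sum_congr rfl fun j _ => sum_congr rfl fun k _ => ?_
        rw [mul_assoc, ← pow_mul, ← zpow_natCast, ← zpow_natCast, ← zpow_mul, ← zpow_add₀ hω0]
        congr 2
        push_cast
        ring
    _ = ∑ j ∈ range n, n * (if (n : ℤ) ∣ j - m then f j else 0) := by
        refine sum_congr rfl fun j _ => ?_
        rw [sum_range_pow_of_pow_eq_one (hω.zpow_pow_eq_one _), hω.zpow_eq_one_iff_dvd]
        split_ifs <;> ring
    _ = n * f m := by rw [← mul_sum, hf.sum_range_ite_dvd_sub_s19 hn]

lemma sawtooth_periodic : Periodic sawtooth 1 := fun x => by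
  simp [sawtooth]

lemma sawtooth_zero : sawtooth 0 = 0 := by
  simp [sawtooth]

lemma sawtooth_natCast_div_of_lt {j n : ℕ} (hj : 0 < j) (hjn : j < n) :
    sawtooth (j / n) = j / n - 1 / 2 := by
  have hn : (0 : ℝ) < n := by exact_mod_cast hj.trans hjn
  have hpos : (0 : ℝ) < j / n := by positivity
  have hlt : (j : ℝ) / n < 1 := (div_lt_one hn).2 (by exact_mod_cast hjn)
  rw [sawtooth, Int.fract_eq_self.2 ⟨hpos.le, hlt⟩, if_neg hpos.ne']

lemma sawtooth_intCast_div_periodic (n : ℕ) (hn : 0 < n) :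
    Periodic (fun m : ℤ => (sawtooth (m / n) : ℂ)) n := fun m => by
  have : (n : ℝ) ≠ 0 := by positivity
  simp only [Int.cast_add, Int.cast_natCast, add_div, div_self this]
  rw [sawtooth_periodic]

/-- At `x = exp (2πik/n)` this is `-(i/2) cot (πk/n)`, the `k`-th discrete Fourier coefficient of
`j ↦ ((j/n))`; the junk value `0` at `x = 1` is the (vanishing) mean of the sawtooth. -/
noncomputable def sawtoothCoeff (x : ℂ) : ℂ := (1 + x) / (2 * (x - 1))

lemma sawtoothCoeff_one : sawtoothCoeff 1 = 0 := by
  simp [sawtoothCoeff]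

lemma sawtoothCoeff_inv {x : ℂ} (hx : x ≠ 0) : sawtoothCoeff x⁻¹ = -sawtoothCoeff x := by
  rcases eq_or_ne x 1 with rfl | hx1
  · simp [sawtoothCoeff_one]
  have hx1' : x - 1 ≠ 0 := sub_ne_zero.2 hx1
  unfold sawtoothCoeff
  field_simp
  ring

lemma one_add_div_one_sub_eq_sawtoothCoeff (x : ℂ) : (1 + x) / (1 - x) = -2 * sawtoothCoeff x := by
  rw [sawtoothCoeff, ← neg_sub x 1, div_neg, mul_comm 2, ← div_div]
  ring

lemma sum_range_sawtooth_mul_pow {n : ℕ} (hn : 0 < n) {x : ℂ} (hx : x ^ n = 1) :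
    ∑ j ∈ range n, (sawtooth (j / n) : ℂ) * x ^ j = sawtoothCoeff x := by
  classical
  have hn' : (n : ℂ) ≠ 0 := by exact_mod_cast hn.ne'
  have hsplit : ∑ j ∈ range n, (sawtooth (j / n) : ℂ) * x ^ j
      = 1 / n * ∑ j ∈ range n, (j : ℂ) * x ^ j - 1 / 2 * ∑ j ∈ range n, x ^ j + 1 / 2 := by
    have hterm : ∀ j ∈ range n, (sawtooth (j / n) : ℂ) * x ^ j
        = (j / n - 1 / 2) * x ^ j + if j = 0 then 1 / 2 else 0 := by
      intro j hj
      rcases j.eq_zero_or_pos with rfl | hj0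
      · simp [sawtooth_zero]
      · rw [sawtooth_natCast_div_of_lt hj0 (mem_range.1 hj), if_neg hj0.ne']
        push_cast
        ring
    rw [sum_congr rfl hterm, sum_add_distrib, sum_ite_eq' _ 0, if_pos (mem_range.2 hn), mul_sum,
      mul_sum, ← sum_sub_distrib]
    congr 1
    exact sum_congr rfl fun j _ => by ring
  have hgeom := sum_range_pow_of_pow_eq_one hx
  rw [hsplit]
  rcases eq_or_ne x 1 with rfl | hx1
  · rw [sawtoothCoeff_one]
    simp only [one_pow, mul_one, sum_const, card_range, nsmul_eq_mul]
    field_simp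
    linear_combination sum_range_natCast_mul_two (R := ℂ) n
  · rw [if_neg hx1] at hgeom
    have hx1' : x - 1 ≠ 0 := sub_ne_zero.2 hx1
    have hweighted : ∑ j ∈ range n, (j : ℂ) * x ^ j = n / (x - 1) := by
      rw [eq_div_iff hx1', mul_comm, sub_one_mul_sum_range_natCast_mul_pow, hgeom, hx]
      ring
    rw [hgeom, hweighted, sawtoothCoeff]
    field_simp
    ring

theorem IsPrimitiveRoot.natCast_mul_sawtooth {ω : ℂ} {n : ℕ} (hω : IsPrimitiveRoot ω n)
    (hn : 0 < n) (m : ℤ) :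
    (n : ℂ) * sawtooth (m / n) = ∑ k ∈ range n, sawtoothCoeff (ω ^ k) * ω ^ (-(m * k)) := by
  rw [← hω.inverse_dft_of_periodic hn (sawtooth_intCast_div_periodic n hn) m]
  refine sum_congr rfl fun k _ => ?_
  rw [← sum_range_sawtooth_mul_pow hn (by rw [pow_right_comm, hω.pow_eq_one, one_pow])]
  simp only [Int.cast_natCast]

theorem IsPrimitiveRoot.natCast_mul_sum_sawtooth_mul_sawtooth {ω : ℂ} {n : ℕ}
    (hω : IsPrimitiveRoot ω n) (hn : 0 < n) (b : ℤ) :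
    (n : ℂ) * ∑ j ∈ range n, (sawtooth (b * j / n) : ℂ) * sawtooth (j / n)
      = ∑ k ∈ range n, sawtoothCoeff (ω ^ k) * sawtoothCoeff (ω ^ (-(b * k))) := by
  calc (n : ℂ) * ∑ j ∈ range n, (sawtooth (b * j / n) : ℂ) * sawtooth (j / n)
      = ∑ j ∈ range n, (∑ k ∈ range n, sawtoothCoeff (ω ^ k) * ω ^ (-((b * j : ℤ) * k)))
          * sawtooth (j / n) := by
        rw [mul_sum]
        refine sum_congr rfl fun j _ => ?_
        rw [← mul_assoc, ← hω.natCast_mul_sawtooth hn]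
        push_cast
        rfl
    _ = ∑ k ∈ range n, sawtoothCoeff (ω ^ k)
          * ∑ j ∈ range n, (sawtooth (j / n) : ℂ) * (ω ^ (-(b * k))) ^ j := by
        simp_rw [sum_mul, mul_sum]
        rw [sum_comm]
        refine sum_congr rfl fun k _ => sum_congr rfl fun j _ => ?_
        rw [← zpow_natCast (ω ^ _) j, ← zpow_mul, show -(b * k) * (j : ℤ) = -(b * j * k) by ring]
        ring
    _ = ∑ k ∈ range n, sawtoothCoeff (ω ^ k) * sawtoothCoeff (ω ^ (-(b * k))) := by
        refine sum_congr rfl fun k _ => ?_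
        rw [sum_range_sawtooth_mul_pow hn (hω.zpow_pow_eq_one _)]

theorem dedekind_sum_cotangent_formula_general (a : ℕ) (ha : 0 < a) (b : ℤ) :
    ((∑ j ∈ Finset.Ioo 0 a, sawtooth ((b : ℝ) * (j : ℝ) / a) * sawtooth ((j : ℝ) / a) : ℝ) : ℂ)
      = -(1 / (4 * (a : ℂ))) * ∑ j ∈ Finset.Ioo 0 a,
          ((1 + Complex.exp (2 * Real.pi * Complex.I / a) ^ (-(j : ℤ))) *
            (1 + Complex.exp (2 * Real.pi * Complex.I / a) ^ (-(b * (j : ℤ))))) /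
          ((1 - Complex.exp (2 * Real.pi * Complex.I / a) ^ (-(j : ℤ))) *
            (1 - Complex.exp (2 * Real.pi * Complex.I / a) ^ (-(b * (j : ℤ))))) := by
  set ω := Complex.exp (2 * Real.pi * Complex.I / a)
  have hω : IsPrimitiveRoot ω a := Complex.isPrimitiveRoot_exp a ha.ne'
  have hω0 : ω ≠ 0 := hω.ne_zero ha.ne'
  have hrhs : ∑ j ∈ Ioo 0 a, ((1 + ω ^ (-(j : ℤ))) * (1 + ω ^ (-(b * (j : ℤ))))) /
        ((1 - ω ^ (-(j : ℤ))) * (1 - ω ^ (-(b * (j : ℤ)))))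
      = -4 * ∑ j ∈ range a, sawtoothCoeff (ω ^ j) * sawtoothCoeff (ω ^ (-(b * j))) := by
    rw [sum_range_eq_sum_Ioo (by simp [sawtoothCoeff_one]), mul_sum]
    refine sum_congr rfl fun j _ => ?_
    rw [mul_div_mul_comm, one_add_div_one_sub_eq_sawtoothCoeff,
      one_add_div_one_sub_eq_sawtoothCoeff, zpow_neg, zpow_natCast,
      sawtoothCoeff_inv (pow_ne_zero _ hω0)]
    ring
  have hlhs : ((∑ j ∈ Ioo 0 a, sawtooth ((b : ℝ) * (j : ℝ) / a) * sawtooth ((j : ℝ) / a) : ℝ) : ℂ)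
      = ∑ j ∈ range a, (sawtooth (b * j / a) : ℂ) * sawtooth (j / a) := by
    push_cast
    exact (sum_range_eq_sum_Ioo (by simp [sawtooth_zero]) a).symm
  have ha' : (a : ℂ) ≠ 0 := by exact_mod_cast ha.ne'
  rw [hrhs, hlhs, ← hω.natCast_mul_sum_sawtooth_mul_sawtooth ha]
  field_simp

theorem dedekind_sum_cotangent_formula (a : ℕ) (ha : 0 < a) (b : ℤ)
    (hb : Int.gcd b a = 1) :
    ((∑ j ∈ Finset.Ioo 0 a, sawtooth ((b : ℝ) * (j : ℝ) / a) * sawtooth ((j : ℝ) / a) : ℝ) : ℂ)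
      = -(1 / (4 * (a : ℂ))) * ∑ j ∈ Finset.Ioo 0 a,
          ((1 + Complex.exp (2 * Real.pi * Complex.I / a) ^ (-(j : ℤ))) *
            (1 + Complex.exp (2 * Real.pi * Complex.I / a) ^ (-(b * (j : ℤ))))) /
          ((1 - Complex.exp (2 * Real.pi * Complex.I / a) ^ (-(j : ℤ))) *
            (1 - Complex.exp (2 * Real.pi * Complex.I / a) ^ (-(b * (j : ℤ))))) :=
  dedekind_sum_cotangent_formula_general a ha b
end
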